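/- arXiv:1311.2758 — 12 statements merged into one kernel-verified Lean document; each statement's English description precedes it below -/
import Mathlib

section
/- For two points τ and τ′ in the complex upper half-plane, there exists a nonzero complex number α such that α·(ℤ + ℤτ′) = ℤ + ℤτ (an equality of subgroups of ℂ) if and only if there exists a matrix (a b; c d) in SL(2,ℤ) with τ′ = (aτ + b)/(cτ + d). -/
/-!
If `α Λ(τ') = Λ(τ)`, then `α` and `ατ'` lie in `Λ(τ)` and `1`, `τ` lie in `αΛ(τ')`; since `1, τ` are
linearly independent over `ℤ`, the two resulting integer coordinate matrices are mutually inverse,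
so `α = cτ + d`, `ατ' = aτ + b` with `ad - bc = ±1`. Then `τ' = (aτ + b)/(cτ + d)`, and the
formula `Im τ' = (ad - bc) Im τ / |cτ + d|²` rules out the sign `-1`. Conversely such a matrix
exhibits `cτ + d` as the scaling factor.
-/

open Complex

def lattice (w : ℂ) : Set ℂ := {z : ℂ | ∃ m n : ℤ, z = (m : ℂ) + (n : ℂ) * w}

lemma one_mem_lattice (w : ℂ) : (1 : ℂ) ∈ lattice w := ⟨1, 0, by simp⟩

lemma self_mem_lattice (w : ℂ) : w ∈ lattice w := ⟨0, 1, by simp⟩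

lemma intCast_add_mul_inj {τ : ℂ} (hτ : τ.im ≠ 0) {m n m' n' : ℤ}
    (h : (m : ℂ) + n * τ = m' + n' * τ) : m = m' ∧ n = n' := by
  have hn : n = n' := by
    have him := congrArg Complex.im h
    simp only [add_im, mul_im, intCast_re, intCast_im, zero_mul, add_zero, zero_add] at him
    exact_mod_cast mul_right_cancel₀ hτ him
  subst hn
  exact ⟨by exact_mod_cast add_right_cancel h, rfl⟩

lemma im_div_linear (a b c d : ℝ) (τ : ℂ) :
    ((a * τ + b) / (c * τ + d)).im = (a * d - b * c) * τ.im / normSq (c * τ + d) := by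
  rw [div_im]
  simp only [add_re, add_im, mul_re, mul_im, ofReal_re, ofReal_im, normSq_apply]
  ring

theorem image_mul_lattice_eq_iff {τ τ' α : ℂ} (hτ : τ.im ≠ 0) :
    (α * ·) '' lattice τ' = lattice τ ↔
      ∃ a b c d : ℤ, IsUnit (a * d - b * c) ∧ α = c * τ + d ∧ α * τ' = a * τ + b := by
  constructor
  · intro h
    obtain ⟨d, c, hα⟩ : α ∈ lattice τ := h ▸ ⟨1, one_mem_lattice τ', mul_one α⟩
    obtain ⟨b, a, hατ'⟩ : α * τ' ∈ lattice τ := h ▸ ⟨τ', self_mem_lattice τ', rfl⟩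
    obtain ⟨_, ⟨m₁, n₁, rfl⟩, h₁⟩ : (1 : ℂ) ∈ (α * ·) '' lattice τ' := h ▸ one_mem_lattice τ
    obtain ⟨_, ⟨m₂, n₂, rfl⟩, h₂⟩ : τ ∈ (α * ·) '' lattice τ' := h ▸ self_mem_lattice τ
    -- `(m₁ n₁; m₂ n₂)` is a left inverse of `(d c; b a)`
    obtain ⟨e₁, e₂⟩ := intCast_add_mul_inj hτ (m := m₁ * d + n₁ * b) (n := m₁ * c + n₁ * a)
      (m' := 1) (n' := 0) (by push_cast; linear_combination h₁ - m₁ * hα - n₁ * hατ')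
    obtain ⟨e₃, e₄⟩ := intCast_add_mul_inj hτ (m := m₂ * d + n₂ * b) (n := m₂ * c + n₂ * a)
      (m' := 0) (n' := 1) (by push_cast; linear_combination h₂ - m₂ * hα - n₂ * hατ')
    refine ⟨a, b, c, d, IsUnit.of_mul_eq_one (m₁ * n₂ - n₁ * m₂) ?_,
      by rw [hα]; ring, by rw [hατ']; ring⟩
    linear_combination (m₂ * c + n₂ * a) * e₁ + e₄ - (m₂ * d + n₂ * b) * e₂
  · rintro ⟨a, b, c, d, hu, hα, hατ'⟩
    have hu' : ((a * d - b * c : ℤ) : ℂ) * ((a * d - b * c : ℤ) : ℂ) = 1 := by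
      exact_mod_cast Int.isUnit_mul_self hu
    push_cast at hu'
    ext z
    constructor
    · rintro ⟨_, ⟨m, n, rfl⟩, rfl⟩
      refine ⟨m * d + n * b, m * c + n * a, ?_⟩
      push_cast
      linear_combination m * hα + n * hατ'
    · rintro ⟨m, n, rfl⟩
      refine ⟨_, ⟨(a * d - b * c) * (a * m - b * n), (a * d - b * c) * (d * n - c * m), rfl⟩, ?_⟩
      push_cast
      linear_combination ((a * d - b * c) * (a * m - b * n) : ℂ) * hα
        + ((a * d - b * c) * (d * n - c * m) : ℂ) * hατ' + (m + n * τ) * hu'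

lemma det_pos_of_im_div_pos {a b c d : ℝ} {τ : ℂ} (hτ : 0 < τ.im)
    (h : 0 < ((a * τ + b) / (c * τ + d)).im) : 0 < a * d - b * c := by
  rw [im_div_linear, div_pos_iff] at h
  rcases h with ⟨h, -⟩ | ⟨-, h⟩
  · exact pos_of_mul_pos_left h hτ.le
  · exact absurd h (normSq_nonneg _).not_gt

/-- For two points `τ` and `τ'` in the upper half-plane, there exists a nonzero
complex number `α` with `α • (ℤ + ℤτ') = ℤ + ℤτ` if and only if `τ' = (aτ + b)/(cτ + d)` for
some matrix `(a b; c d) ∈ SL(2, ℤ)`. -/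
theorem stmt_0 (τ τ' : UpperHalfPlane) :
    (∃ α : ℂ, α ≠ 0 ∧
        (fun z : ℂ => α * z) '' {z : ℂ | ∃ m n : ℤ, z = (m : ℂ) + (n : ℂ) * (τ' : ℂ)} =
          {z : ℂ | ∃ m n : ℤ, z = (m : ℂ) + (n : ℂ) * (τ : ℂ)}) ↔
      (∃ g : Matrix.SpecialLinearGroup (Fin 2) ℤ,
        (τ' : ℂ) = ((g 0 0 : ℂ) * (τ : ℂ) + (g 0 1 : ℂ)) /
            ((g 1 0 : ℂ) * (τ : ℂ) + (g 1 1 : ℂ))) := by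
  constructor
  · rintro ⟨α, hα0, h⟩
    obtain ⟨a, b, c, d, hu, hα, hατ'⟩ := (image_mul_lattice_eq_iff τ.im_ne_zero).1 h
    have hτ' : (τ' : ℂ) = (a * τ + b) / (c * τ + d) := by
      rw [eq_div_iff (hα ▸ hα0)]
      linear_combination hατ' - (τ' : ℂ) * hα
    have hpos : 0 < a * d - b * c := by
      have := det_pos_of_im_div_pos (a := a) (b := b) (c := c) (d := d) τ.im_pos
      push_cast at this
      exact_mod_cast this (hτ' ▸ τ'.im_pos)
    have hdet : a * d - b * c = 1 := (Int.isUnit_iff.1 hu).resolve_right (by omega)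
    exact ⟨⟨!![a, b; c, d], by simpa [Matrix.det_fin_two_of] using hdet⟩, hτ'⟩
  · rintro ⟨g, hg⟩
    have hdet : g 0 0 * g 1 1 - g 0 1 * g 1 0 = 1 := by
      rw [← Matrix.det_fin_two]; exact g.det_coe
    have hden : (g 1 0 * τ + g 1 1 : ℂ) ≠ 0 := fun h0 ↦ by
      obtain ⟨hd, hc⟩ := intCast_add_mul_inj τ.im_ne_zero (m := g 1 1) (n := g 1 0)
        (m' := 0) (n' := 0) (by push_cast; linear_combination h0)
      simp [hc, hd] at hdet
    refine ⟨_, hden, (image_mul_lattice_eq_iff τ.im_ne_zero).2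
      ⟨g 0 0, g 0 1, g 1 0, g 1 1, by rw [hdet]; exact isUnit_one, rfl, ?_⟩⟩
    rw [hg, mul_div_cancel₀ _ hden]
end

section
/- The improper integral of 1/√(x³ − x) over the interval (1, ∞) equals Γ(1/4)² / (2√(2π)), where Γ is Euler's Gamma function; that is, ∫₁^∞ dx/√(x³ − x) = Γ(1/4)²/(2√(2π)). -/
/-!
The substitution `x = s^(-1/2)` maps `(0, 1)` onto `(1, ∞)` and turns `dx / √(x³ - x)` into
`½ s^(-3/4) (1 - s)^(-1/2) ds`, so the integral is half the Beta value
`B(1/4, 1/2) = Γ(1/4) Γ(1/2) / Γ(3/4)`. The reflection formula gives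
`Γ(1/4) Γ(3/4) = π / sin(π/4) = π √2`, and with `Γ(1/2) = √π` the Beta value is `Γ(1/4)² / √(2π)`.
-/

open MeasureTheory Set Real

namespace Real

theorem integral_rpow_mul_one_sub_rpow_eq_Gamma_mul_div {a b : ℝ} (ha : 0 < a) (hb : 0 < b) :
    ∫ s in Ioo (0 : ℝ) 1, s ^ (a - 1) * (1 - s) ^ (b - 1) = Gamma a * Gamma b / Gamma (a + b) := by
  have hbeta := Complex.betaIntegral_eq_Gamma_mul_div a b (by simpa) (by simpa)
  rw [Complex.betaIntegral, intervalIntegral.integral_of_le zero_le_one,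
    integral_Ioc_eq_integral_Ioo, ← Complex.ofReal_add, Complex.Gamma_ofReal,
    Complex.Gamma_ofReal, Complex.Gamma_ofReal] at hbeta
  rw [← Complex.ofReal_inj, Complex.ofReal_div, Complex.ofReal_mul, ← hbeta,
    ← integral_complex_ofReal]
  refine setIntegral_congr_fun measurableSet_Ioo fun s ⟨hs0, hs1⟩ ↦ ?_
  rw [Complex.ofReal_mul, Complex.ofReal_cpow hs0.le, Complex.ofReal_cpow (by linarith)]
  push_cast
  rfl

theorem Gamma_one_fourth_mul_Gamma_three_fourths : Gamma (1 / 4) * Gamma (3 / 4) = π * √2 := by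
  have h := Gamma_mul_Gamma_one_sub (1 / 4)
  rw [show π * (1 / 4) = π / 4 by ring, sin_pi_div_four] at h
  rw [show (3 : ℝ) / 4 = 1 - 1 / 4 by norm_num, h]
  field_simp
  norm_num

end Real

theorem integral_comp_rpow_Ioo_of_neg {E : Type*} [NormedAddCommGroup E] [NormedSpace ℝ E]
    (g : ℝ → E) {p : ℝ} (hp : p < 0) :
    ∫ s in Ioo (0 : ℝ) 1, (-p * s ^ (p - 1)) • g (s ^ p) = ∫ x in Ioi 1, g x := by
  have himage : (· ^ p) '' Ioo (0 : ℝ) 1 = Ioi 1 := by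
    ext x
    constructor
    · rintro ⟨s, ⟨hs0, hs1⟩, rfl⟩
      exact one_lt_rpow_of_pos_of_lt_one_of_neg hs0 hs1 hp
    · intro hx
      have hx0 : 0 < x := one_pos.trans hx
      refine ⟨x ^ p⁻¹, ⟨rpow_pos_of_pos hx0 _, rpow_lt_one_of_one_lt_of_neg hx (inv_lt_zero.mpr hp)⟩,
        ?_⟩
      simp [← rpow_mul hx0.le, hp.ne]
  have hsubst := integral_image_eq_integral_abs_deriv_smul (measurableSet_Ioo (a := 0) (b := 1))
    (fun s hs ↦ (hasDerivAt_rpow_const (Or.inl hs.1.ne')).hasDerivWithinAt)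
    ((rpow_left_injOn hp.ne).mono (fun s hs ↦ le_of_lt hs.1)) g
  rw [himage] at hsubst
  rw [hsubst]
  refine setIntegral_congr_fun measurableSet_Ioo fun s hs ↦ ?_
  rw [abs_mul, abs_of_neg hp, abs_of_nonneg (rpow_nonneg hs.1.le _)]

theorem integral_Ioi_one_div_sqrt_pow_three_sub_self :
    ∫ x in Ioi (1 : ℝ), 1 / √(x ^ 3 - x) =
      2⁻¹ * ∫ s in Ioo (0 : ℝ) 1, s ^ ((1 : ℝ) / 4 - 1) * (1 - s) ^ ((1 : ℝ) / 2 - 1) := by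
  rw [← integral_comp_rpow_Ioo_of_neg _ (by norm_num : -(1 : ℝ) / 2 < 0), ← integral_const_mul]
  refine setIntegral_congr_fun measurableSet_Ioo fun s ⟨hs0, hs1⟩ ↦ ?_
  -- every power of `s` that occurs is a power of `y = s^(-3/4)`, up to one factor `s`
  set y := s ^ (-(3 : ℝ) / 4)
  have hy : 0 < y := rpow_pos_of_pos hs0 _
  have hcube : (s ^ (-(1 : ℝ) / 2)) ^ 3 = y ^ 2 := by
    rw [← rpow_natCast, ← rpow_natCast, ← rpow_mul hs0.le, ← rpow_mul hs0.le]
    norm_num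
  have hderiv : s ^ (-(1 : ℝ) / 2 - 1) = y ^ 2 := by
    rw [← hcube, ← rpow_natCast, ← rpow_mul hs0.le]
    norm_num
  have hx : s ^ (-(1 : ℝ) / 2) = y ^ 2 * s := by
    rw [← hderiv, ← rpow_add_one hs0.ne']
    norm_num
  have hsqrt : √(y ^ 2 - y ^ 2 * s) = y * √(1 - s) := by
    rw [show y ^ 2 - y ^ 2 * s = y ^ 2 * (1 - s) by ring, sqrt_mul (sq_nonneg y), sqrt_sq hy.le]
  have hleft : s ^ ((1 : ℝ) / 4 - 1) = y := by norm_num [y]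
  have hright : (1 - s) ^ ((1 : ℝ) / 2 - 1) = (√(1 - s))⁻¹ := by
    rw [show (1 : ℝ) / 2 - 1 = -(1 / 2) by norm_num, rpow_neg (by linarith), sqrt_eq_rpow]
  have hsqrt_pos : 0 < √(1 - s) := sqrt_pos.mpr (by linarith)
  rw [hcube, hderiv, hx, hsqrt, hleft, hright, smul_eq_mul]
  field_simp

/-- `∫₁^∞ dx/√(x³ − x) = Γ(1/4)² / (2√(2π))`. -/
theorem stmt_3 :
    ∫ x in Set.Ioi (1 : ℝ), 1 / Real.sqrt (x ^ 3 - x) =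
      Real.Gamma (1 / 4) ^ 2 / (2 * Real.sqrt (2 * Real.pi)) := by
  rw [integral_Ioi_one_div_sqrt_pow_three_sub_self,
    integral_rpow_mul_one_sub_rpow_eq_Gamma_mul_div (by norm_num) (by norm_num),
    show (1 : ℝ) / 4 + 1 / 2 = 3 / 4 by norm_num, Gamma_one_half_eq, sqrt_mul zero_le_two]
  field_simp
  rw [Gamma_one_fourth_mul_Gamma_three_fourths, sq_sqrt pi_pos.le]
end

section
/- Let a and b be integers and set Δ₁ = a² − 4(b − 2). If Δ₁ is a perfect square (the square of an integer), then the polynomial P(x) = x⁴ + a x³ + b x² + a x + 1 is reducible over ℚ. -/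
/-!
With `y = x + 1/x` the reciprocal quartic becomes `y² + a y + (b − 2)`, whose discriminant is `Δ₁`.
When `Δ₁ = j²` this quadratic has the rational roots `r, s = (a ± j)/2`, and accordingly
`x⁴ + a x³ + b x² + a x + 1 = (x² + r x + 1)(x² + s x + 1)`.
-/

open Polynomial

namespace Polynomial

theorem not_irreducible_mul_of_natDegree_ne_zero {R : Type*} [CommRing R] [IsDomain R]
    {p q : R[X]} (hp : p.natDegree ≠ 0) (hq : q.natDegree ≠ 0) : ¬Irreducible (p * q) :=
  fun h => (h.isUnit_or_isUnit rfl).elim (hp ∘ natDegree_eq_zero_of_isUnit)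
    (hq ∘ natDegree_eq_zero_of_isUnit)

theorem natDegree_X_sq_add_C_mul_X_add_one {R : Type*} [Semiring R] [Nontrivial R] (r : R) :
    (X ^ 2 + C r * X + 1 : R[X]).natDegree = 2 := by
  compute_degree!

theorem reciprocalQuartic_eq_mul {R : Type*} [CommRing R] (r s : R) :
    (X ^ 4 + C (r + s) * X ^ 3 + C (r * s + 2) * X ^ 2 + C (r + s) * X + 1 : R[X]) =
      (X ^ 2 + C r * X + 1) * (X ^ 2 + C s * X + 1) := by
  simp only [C_add, C_mul, C_ofNat]
  ring

theorem not_irreducible_reciprocalQuartic_of_discrim_eq_sq {K : Type*} [Field K]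
    [NeZero (2 : K)] {a b j : K} (h : a ^ 2 - 4 * (b - 2) = j ^ 2) :
    ¬Irreducible (X ^ 4 + C a * X ^ 3 + C b * X ^ 2 + C a * X + 1 : K[X]) := by
  have hsum : (a + j) / 2 + (a - j) / 2 = a := by field_simp; ring
  have hprod : (a + j) / 2 * ((a - j) / 2) + 2 = b := by
    field_simp
    linear_combination h
  rw [← hsum, ← hprod, reciprocalQuartic_eq_mul]
  exact not_irreducible_mul_of_natDegree_ne_zero
    (by simp [natDegree_X_sq_add_C_mul_X_add_one]) (by simp [natDegree_X_sq_add_C_mul_X_add_one])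

end Polynomial

/-- If `Δ₁ = a² − 4(b − 2)` is a perfect square, then the reciprocal quartic
`x⁴ + a x³ + b x² + a x + 1` is reducible over `ℚ`. -/
theorem stmt_4 (a b : ℤ) (h : ∃ j : ℤ, a ^ 2 - 4 * (b - 2) = j ^ 2) :
    ¬ Irreducible
        (X ^ 4 + C (a : ℚ) * X ^ 3 + C (b : ℚ) * X ^ 2 + C (a : ℚ) * X + 1 : Polynomial ℚ) := by
  obtain ⟨j, hj⟩ := h
  exact not_irreducible_reciprocalQuartic_of_discrim_eq_sq (j := (j : ℚ)) (by exact_mod_cast hj)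
end

section
/- Let a and b be integers such that the polynomial P(x) = x⁴ + a x³ + b x² + a x + 1 is irreducible over ℚ, Δ₁ = a² − 4(b − 2) is not a perfect square, and Δ₂ = (b + 2)² − 4a² is a perfect square. Then the splitting field K of P over ℚ has degree [K : ℚ] = 4 and the Galois group Gal(K/ℚ) is isomorphic to (ℤ/2ℤ) × (ℤ/2ℤ). -/
/-!
For a root `r` of `x⁴ + a x³ + b x² + a x + 1`, the number `y = r + r⁻¹` satisfies
`y² + a y + b - 2 = 0`, so the roots are `r, r⁻¹, s, s⁻¹` with `s + s⁻¹ = -a - y`, and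
`((r - r⁻¹)(s - s⁻¹))² = (b + 2)² - 4a²`. When `Δ₂ = j²` this makes `(r - r⁻¹)(s - s⁻¹) = ±j`
rational, so `s ± s⁻¹`, hence `s`, lie in `ℚ(r)`: the splitting field is `ℚ(r)`, of degree 4.
An automorphism `σ` with `σ² r = r⁻¹` would send `y` to `-a - y` and negate the
rational number `(r - r⁻¹)(σ r - (σ r)⁻¹)` (nonzero as `±1` are not roots); hence `σ² = 1`.
-/

open Polynomial IntermediateField

noncomputable def reciprocalQuartic {R : Type*} [CommRing R] (a b : R) : R[X] :=
  X ^ 4 + C a * X ^ 3 + C b * X ^ 2 + C a * X + 1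

section CommRing

variable {R : Type*} [CommRing R] (a b : R)

theorem natDegree_reciprocalQuartic [Nontrivial R] : (reciprocalQuartic a b).natDegree = 4 := by
  unfold reciprocalQuartic; compute_degree!

theorem monic_reciprocalQuartic [Nontrivial R] : (reciprocalQuartic a b).Monic := by
  unfold reciprocalQuartic; monicity!

theorem aeval_reciprocalQuartic {A : Type*} [CommRing A] [Algebra R A] (t : A) :
    aeval t (reciprocalQuartic a b) =
      (reciprocalQuartic (algebraMap R A a) (algebraMap R A b)).eval t := by
  simp [reciprocalQuartic]

end CommRing

section Field

variable {K : Type*} [Field K] {a b r s t : K}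

theorem isRoot_reciprocalQuartic_iff :
    (reciprocalQuartic a b).IsRoot t ↔ t ^ 4 + a * t ^ 3 + b * t ^ 2 + a * t + 1 = 0 := by
  simp [reciprocalQuartic]

theorem ne_zero_of_isRoot_reciprocalQuartic (ht : (reciprocalQuartic a b).IsRoot t) : t ≠ 0 := by
  rintro rfl
  simp [reciprocalQuartic] at ht

theorem add_inv_sq_add_of_isRoot (ht : (reciprocalQuartic a b).IsRoot t) :
    (t + t⁻¹) ^ 2 + a * (t + t⁻¹) + (b - 2) = 0 := by
  have ht0 := ne_zero_of_isRoot_reciprocalQuartic ht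
  rw [isRoot_reciprocalQuartic_iff] at ht
  field_simp
  linear_combination ht

theorem add_inv_eq_or_add_add_inv_eq (hr : (reciprocalQuartic a b).IsRoot r)
    (hs : (reciprocalQuartic a b).IsRoot s) :
    s + s⁻¹ = r + r⁻¹ ∨ s + s⁻¹ + (r + r⁻¹) = -a := by
  have hfac : (s + s⁻¹ - (r + r⁻¹)) * (s + s⁻¹ + (r + r⁻¹) + a) = 0 := by
    linear_combination add_inv_sq_add_of_isRoot hs - add_inv_sq_add_of_isRoot hr
  rcases mul_eq_zero.mp hfac with h | h
  · exact .inl (by linear_combination h)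
  · exact .inr (by linear_combination h)

theorem eq_or_eq_inv_of_add_inv_eq (hs : s ≠ 0) (hr : r ≠ 0) (h : s + s⁻¹ = r + r⁻¹) :
    s = r ∨ s = r⁻¹ := by
  have hfac : (s - r) * (s - r⁻¹) = 0 := by
    linear_combination s * h - mul_inv_cancel₀ hs + mul_inv_cancel₀ hr
  rcases mul_eq_zero.mp hfac with h | h
  · exact .inl (sub_eq_zero.mp h)
  · exact .inr (sub_eq_zero.mp h)

theorem sub_inv_mul_sub_inv_sq (hr : (reciprocalQuartic a b).IsRoot r)
    (hs : (reciprocalQuartic a b).IsRoot s) (h : s + s⁻¹ + (r + r⁻¹) = -a) :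
    ((r - r⁻¹) * (s - s⁻¹)) ^ 2 = (b + 2) ^ 2 - 4 * a ^ 2 := by
  have hr' : (r - r⁻¹) ^ 2 = (r + r⁻¹) ^ 2 - 4 := by
    linear_combination -4 * mul_inv_cancel₀ (ne_zero_of_isRoot_reciprocalQuartic hr)
  have hs' : (s - s⁻¹) ^ 2 = (s + s⁻¹) ^ 2 - 4 := by
    linear_combination -4 * mul_inv_cancel₀ (ne_zero_of_isRoot_reciprocalQuartic hs)
  rw [mul_pow, hr', hs', show s + s⁻¹ = -a - (r + r⁻¹) by linear_combination h]
  linear_combination ((r + r⁻¹) ^ 2 + a * (r + r⁻¹) - b - 6) * add_inv_sq_add_of_isRoot hr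

end Field

section Extension

variable {k L : Type*} [Field k] [Field L] [Algebra k L] {a b j : k} {r s : L}

theorem ne_algebraMap_of_irreducible {p : k[X]} (hirr : Irreducible p) (hdeg : p.natDegree ≠ 1)
    {t : L} (ht : aeval t p = 0) (c : k) : t ≠ algebraMap k L c := by
  rintro rfl
  rw [aeval_algebraMap_apply_eq_algebraMap_eval, map_eq_zero] at ht
  exact hdeg (natDegree_eq_of_degree_eq_some (degree_eq_one_of_irreducible_of_root hirr ht))

theorem sub_inv_ne_zero_of_irreducible (hirr : Irreducible (reciprocalQuartic a b))
    {t : L} (ht : aeval t (reciprocalQuartic a b) = 0) : t - t⁻¹ ≠ 0 := by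
  have hdeg : (reciprocalQuartic a b).natDegree ≠ 1 := by
    rw [natDegree_reciprocalQuartic]; decide
  have ht0 : t ≠ 0 := by
    rw [aeval_reciprocalQuartic] at ht
    exact ne_zero_of_isRoot_reciprocalQuartic ht
  intro h
  have hsq : t * t = 1 := by
    rw [sub_eq_zero] at h
    rw [← mul_inv_cancel₀ ht0, ← h]
  rcases mul_self_eq_one_iff.mp hsq with rfl | rfl
  · exact ne_algebraMap_of_irreducible hirr hdeg ht 1 (map_one _).symm
  · exact ne_algebraMap_of_irreducible hirr hdeg ht (-1) (by simp)

theorem sub_inv_mul_sub_inv_sq_eq_algebraMap_sq (hj : (b + 2) ^ 2 - 4 * a ^ 2 = j ^ 2)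
    (hr : aeval r (reciprocalQuartic a b) = 0) (hs : aeval s (reciprocalQuartic a b) = 0)
    (h : s + s⁻¹ + (r + r⁻¹) = -algebraMap k L a) :
    ((r - r⁻¹) * (s - s⁻¹)) ^ 2 = algebraMap k L j ^ 2 := by
  rw [aeval_reciprocalQuartic] at hr hs
  rw [sub_inv_mul_sub_inv_sq hr hs h]
  simpa [map_ofNat] using congrArg (algebraMap k L) hj

theorem mem_adjoin_simple_of_aeval_eq_zero [CharZero k] (hj : (b + 2) ^ 2 - 4 * a ^ 2 = j ^ 2)
    (hirr : Irreducible (reciprocalQuartic a b)) (hr : aeval r (reciprocalQuartic a b) = 0)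
    (hs : aeval s (reciprocalQuartic a b) = 0) : s ∈ k⟮r⟯ := by
  have : CharZero L := charZero_of_injective_algebraMap (algebraMap k L).injective
  have hrF : r ∈ k⟮r⟯ := mem_adjoin_simple_self k r
  have hr' := (aeval_reciprocalQuartic a b r).symm.trans hr
  have hs' := (aeval_reciprocalQuartic a b _).symm.trans hs
  rcases add_inv_eq_or_add_add_inv_eq hr' hs' with h | h
  · rcases eq_or_eq_inv_of_add_inv_eq (ne_zero_of_isRoot_reciprocalQuartic hs')
      (ne_zero_of_isRoot_reciprocalQuartic hr') h with rfl | rfl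
    exacts [hrF, inv_mem hrF]
  have hadd : s + s⁻¹ ∈ k⟮r⟯ := by
    rw [show s + s⁻¹ = -algebraMap k L a - (r + r⁻¹) by linear_combination h]
    exact sub_mem (neg_mem (IntermediateField.algebraMap_mem _ a)) (add_mem hrF (inv_mem hrF))
  have hsub : s - s⁻¹ ∈ k⟮r⟯ := by
    have hsq := sub_inv_mul_sub_inv_sq_eq_algebraMap_sq hj hr hs h
    rw [← mul_div_cancel_left₀ (s - s⁻¹) (sub_inv_ne_zero_of_irreducible hirr hr)]
    refine div_mem ?_ (sub_mem hrF (inv_mem hrF))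
    rcases sq_eq_sq_iff_eq_or_eq_neg.mp hsq with hz | hz <;> rw [hz]
    exacts [IntermediateField.algebraMap_mem _ j, neg_mem (IntermediateField.algebraMap_mem _ j)]
  rw [show s = (s + s⁻¹ + (s - s⁻¹)) / 2 by ring]
  exact div_mem (add_mem hadd hsub) (ofNat_mem _ 2)

end Extension

section Galois

variable {k L : Type*} [Field k] [Field L] [Algebra k L] {a b j : k} {r : L}

theorem AlgEquiv.apply_eq_self_of_sq_eq_algebraMap_sq (σ : L ≃ₐ[k] L) {z : L} {c : k}
    (h : z ^ 2 = algebraMap k L c ^ 2) : σ z = z := by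
  rcases sq_eq_sq_iff_eq_or_eq_neg.mp h with rfl | rfl <;> simp

theorem apply_apply_eq_self_of_aeval_eq_zero [CharZero k] (hj : (b + 2) ^ 2 - 4 * a ^ 2 = j ^ 2)
    (hirr : Irreducible (reciprocalQuartic a b)) (hr : aeval r (reciprocalQuartic a b) = 0)
    (σ : L ≃ₐ[k] L) : σ (σ r) = r := by
  have : CharZero L := charZero_of_injective_algebraMap (algebraMap k L).injective
  have hs : aeval (σ r) (reciprocalQuartic a b) = 0 := by rw [aeval_algHom_apply, hr, map_zero]
  have hr' := (aeval_reciprocalQuartic a b r).symm.trans hr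
  have hs' := (aeval_reciprocalQuartic a b _).symm.trans hs
  rcases add_inv_eq_or_add_add_inv_eq hr' hs' with h | h
  · rcases eq_or_eq_inv_of_add_inv_eq (ne_zero_of_isRoot_reciprocalQuartic hs')
      (ne_zero_of_isRoot_reciprocalQuartic hr') h with h' | h'
    · rw [h', h']
    · rw [h', map_inv₀, h', inv_inv]
  have ht : (reciprocalQuartic (algebraMap k L a) (algebraMap k L b)).IsRoot (σ (σ r)) := by
    rw [IsRoot, ← aeval_reciprocalQuartic, aeval_algHom_apply, hs, map_zero]
  have hsum : σ (σ r) + (σ (σ r))⁻¹ = r + r⁻¹ := by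
    have hσ := congrArg σ h
    simp only [map_add, map_inv₀, map_neg, AlgEquiv.commutes] at hσ
    linear_combination hσ - h
  rcases eq_or_eq_inv_of_add_inv_eq (ne_zero_of_isRoot_reciprocalQuartic ht)
    (ne_zero_of_isRoot_reciprocalQuartic hr') hsum with h' | h'
  · exact h'
  set z := (r - r⁻¹) * (σ r - (σ r)⁻¹) with hz
  have hfix : σ z = z :=
    σ.apply_eq_self_of_sq_eq_algebraMap_sq (sub_inv_mul_sub_inv_sq_eq_algebraMap_sq hj hr hs h)
  have hneg : σ z = -z := by
    rw [hz, map_mul, map_sub, map_sub, map_inv₀, map_inv₀, h', inv_inv]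
    ring
  rw [hfix] at hneg
  exact (mul_ne_zero (sub_inv_ne_zero_of_irreducible hirr hr)
    (sub_inv_ne_zero_of_irreducible hirr hs) (CharZero.eq_neg_self_iff.mp hneg)).elim

end Galois

theorem AlgEquiv.eq_one_of_apply_eq_self {k L : Type*} [Field k] [Field L] [Algebra k L]
    {r : L} (htop : Algebra.adjoin k {r} = ⊤) (σ : L ≃ₐ[k] L) (h : σ r = r) : σ = 1 :=
  AlgEquiv.coe_toAlgHom_injective <| AlgHom.ext_of_adjoin_eq_top htop
    (φ₁ := (σ : L →ₐ[k] L)) (φ₂ := ((1 : L ≃ₐ[k] L) : L →ₐ[k] L)) (Set.eqOn_singleton.mpr h)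

section SplittingField

variable {k : Type*} [Field k] [CharZero k] {a b j : k}

theorem exists_aeval_eq_zero_and_adjoin_eq_top (hj : (b + 2) ^ 2 - 4 * a ^ 2 = j ^ 2)
    (hirr : Irreducible (reciprocalQuartic a b)) :
    ∃ r : (reciprocalQuartic a b).SplittingField,
      aeval r (reciprocalQuartic a b) = 0 ∧ k⟮r⟯ = ⊤ := by
  obtain ⟨r, hr⟩ := (SplittingField.splits (reciprocalQuartic a b)).exists_eval_eq_zero (by
    rw [degree_map, degree_eq_natDegree (monic_reciprocalQuartic a b).ne_zero,
      natDegree_reciprocalQuartic]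
    norm_num)
  rw [eval_map_algebraMap] at hr
  refine ⟨r, hr, eq_top_iff.mpr ?_⟩
  rw [← adjoin_eq_top_of_algebra k _ (SplittingField.adjoin_rootSet _), adjoin_le_iff]
  exact fun s hs ↦ mem_adjoin_simple_of_aeval_eq_zero hj hirr hr (mem_rootSet.mp hs).2

theorem finrank_splittingField_reciprocalQuartic (hj : (b + 2) ^ 2 - 4 * a ^ 2 = j ^ 2)
    (hirr : Irreducible (reciprocalQuartic a b)) :
    Module.finrank k (reciprocalQuartic a b).SplittingField = 4 := by
  obtain ⟨r, hr, htop⟩ := exists_aeval_eq_zero_and_adjoin_eq_top hj hirr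
  have hmin : minpoly k r = reciprocalQuartic a b :=
    (minpoly.eq_of_irreducible_of_monic hirr hr (monic_reciprocalQuartic a b)).symm
  rw [← finrank_top', ← htop, adjoin.finrank ⟨_, monic_reciprocalQuartic a b, hr⟩, hmin,
    natDegree_reciprocalQuartic]

theorem isKleinFour_gal_reciprocalQuartic (hj : (b + 2) ^ 2 - 4 * a ^ 2 = j ^ 2)
    (hirr : Irreducible (reciprocalQuartic a b)) : IsKleinFour (reciprocalQuartic a b).Gal := by
  obtain ⟨r, hr, htop⟩ := exists_aeval_eq_zero_and_adjoin_eq_top hj hirr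
  have htop' : Algebra.adjoin k {r} = ⊤ := (adjoin_simple_eq_top_iff_of_isAlgebraic
    (IsIntegral.isAlgebraic ⟨_, monic_reciprocalQuartic a b, hr⟩)).mp htop
  have hcard : Nat.card (reciprocalQuartic a b).Gal = 4 := by
    rw [Gal.card_of_separable hirr.separable, finrank_splittingField_reciprocalQuartic hj hirr]
  have : Nontrivial (reciprocalQuartic a b).Gal := Finite.one_lt_card_iff_nontrivial.mp (by omega)
  refine ⟨hcard, (Monoid.exponent_eq_prime_iff Nat.prime_two).mpr fun σ hσ ↦ ?_⟩
  refine orderOf_eq_prime ?_ hσ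
  exact AlgEquiv.eq_one_of_apply_eq_self htop' _
    (apply_apply_eq_self_of_aeval_eq_zero hj hirr hr σ)

end SplittingField

theorem stmt_5_general (a b : ℤ) (P : Polynomial ℚ)
    (hP : P = X ^ 4 + C (a : ℚ) * X ^ 3 + C (b : ℚ) * X ^ 2 + C (a : ℚ) * X + 1)
    (hirr : Irreducible P)
    (hΔ₂ : ∃ j : ℤ, (b + 2) ^ 2 - 4 * a ^ 2 = j ^ 2) :
    Module.finrank ℚ P.SplittingField = 4 ∧
      Nonempty (P.Gal ≃* Multiplicative (ZMod 2 × ZMod 2)) := by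
  obtain ⟨j, hj⟩ := hΔ₂
  have hjℚ : ((b : ℚ) + 2) ^ 2 - 4 * (a : ℚ) ^ 2 = (j : ℚ) ^ 2 := by exact_mod_cast hj
  have hP' : P = reciprocalQuartic (a : ℚ) b := hP
  subst hP'
  have := isKleinFour_gal_reciprocalQuartic hjℚ hirr
  exact ⟨finrank_splittingField_reciprocalQuartic hjℚ hirr, IsKleinFour.nonempty_mulEquiv⟩

/-- If the reciprocal quartic `P = x⁴ + a x³ + b x² + a x + 1` is irreducible
over `ℚ`, `Δ₁ = a² − 4(b − 2)` is not a perfect square and `Δ₂ = (b + 2)² − 4a²` is a perfect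
square, then the splitting field of `P` has degree `4` over `ℚ` and the Galois group is
isomorphic to `(ℤ/2ℤ) × (ℤ/2ℤ)`. -/
theorem stmt_5 (a b : ℤ) (P : Polynomial ℚ)
    (hP : P = X ^ 4 + C (a : ℚ) * X ^ 3 + C (b : ℚ) * X ^ 2 + C (a : ℚ) * X + 1)
    (hirr : Irreducible P)
    (hΔ₁ : ¬ ∃ j : ℤ, a ^ 2 - 4 * (b - 2) = j ^ 2)
    (hΔ₂ : ∃ j : ℤ, (b + 2) ^ 2 - 4 * a ^ 2 = j ^ 2) :
    Module.finrank ℚ P.SplittingField = 4 ∧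
      Nonempty (P.Gal ≃* Multiplicative (ZMod 2 × ZMod 2)) :=
  stmt_5_general a b P hP hirr hΔ₂
end

section
/- Let a and b be integers such that the polynomial P(x) = x⁴ + a x³ + b x² + a x + 1 is irreducible over ℚ, neither Δ₁ = a² − 4(b − 2) nor Δ₂ = (b + 2)² − 4a² is a perfect square, and the product Δ₁Δ₂ is a perfect square. Then the splitting field K of P over ℚ has degree [K : ℚ] = 4 and the Galois group Gal(K/ℚ) is cyclic of order 4 (isomorphic to ℤ/4ℤ). -/
/-!
For a root `x` of `P`, `x + x⁻¹` is a root of `t² + a t + (b - 2)`, whose discriminant is `Δ₁`.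
Fix a root `α`. A root `x ∉ {α, α⁻¹}` has `x + x⁻¹ = -a - (α + α⁻¹)`, and then
`E = (α - α⁻¹)(x - x⁻¹)((α + α⁻¹) - (x + x⁻¹))` satisfies `E² = Δ₁Δ₂`, so `E` is rational.
Solving for `x - x⁻¹` puts `x` in `ℚ(α)`, hence the splitting field is `ℚ(α)` and has degree 4.
Since `E` changes sign when `α` and `x` are swapped, no automorphism with `σ α = x` is an
involution, so the Galois group of order 4 has an element of order 4.
-/

open Polynomial

noncomputable def recipQuartic {R : Type*} [CommRing R] (A B : R) : R[X] :=
  X ^ 4 + C A * X ^ 3 + C B * X ^ 2 + C A * X + 1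

section CommRing

variable {R S : Type*} [CommRing R] [CommRing S]

lemma map_recipQuartic (f : R →+* S) (A B : R) :
    (recipQuartic A B).map f = recipQuartic (f A) (f B) := by
  simp [recipQuartic]

lemma eval_recipQuartic (A B x : R) :
    (recipQuartic A B).eval x = x ^ 4 + A * x ^ 3 + B * x ^ 2 + A * x + 1 := by
  simp [recipQuartic]

lemma monic_recipQuartic [Nontrivial R] (A B : R) : (recipQuartic A B).Monic := by
  unfold recipQuartic; monicity!

lemma natDegree_recipQuartic [Nontrivial R] (A B : R) : (recipQuartic A B).natDegree = 4 := by
  unfold recipQuartic; compute_degree!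

end CommRing

section Field

variable {L : Type*} [Field L] {A B α x : L}

lemma ne_zero_of_isRoot_recipQuartic (h : (recipQuartic A B).IsRoot x) : x ≠ 0 := by
  rintro rfl
  simp [IsRoot, eval_recipQuartic] at h

lemma eval_recipQuartic_eq_sq_mul (hx : x ≠ 0) :
    (recipQuartic A B).eval x = x ^ 2 * ((x + x⁻¹) ^ 2 + A * (x + x⁻¹) + (B - 2)) := by
  rw [eval_recipQuartic]
  field_simp
  ring

lemma eq_or_eq_inv_of_add_inv_eq_s6 (hα : α ≠ 0) (hx : x ≠ 0) (h : x + x⁻¹ = α + α⁻¹) :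
    x = α ∨ x = α⁻¹ := by
  have : (x - α) * (x - α⁻¹) = 0 := by
    linear_combination x * h - mul_inv_cancel₀ hx + mul_inv_cancel₀ hα
  simpa [sub_eq_zero] using this

lemma isRoot_recipQuartic_cases (hα : (recipQuartic A B).IsRoot α)
    (hx : (recipQuartic A B).IsRoot x) :
    x = α ∨ x = α⁻¹ ∨
      (α + α⁻¹ + (x + x⁻¹) = -A ∧ (α + α⁻¹) * (x + x⁻¹) = B - 2) := by
  have hα0 := ne_zero_of_isRoot_recipQuartic hα
  have hx0 := ne_zero_of_isRoot_recipQuartic hx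
  have qα : (α + α⁻¹) ^ 2 + A * (α + α⁻¹) + (B - 2) = 0 := by
    simpa [IsRoot, eval_recipQuartic_eq_sq_mul hα0, hα0] using hα
  have qx : (x + x⁻¹) ^ 2 + A * (x + x⁻¹) + (B - 2) = 0 := by
    simpa [IsRoot, eval_recipQuartic_eq_sq_mul hx0, hx0] using hx
  have : (x + x⁻¹ - (α + α⁻¹)) * (α + α⁻¹ + (x + x⁻¹) + A) = 0 := by
    linear_combination qx - qα
  rcases mul_eq_zero.mp this with h | h
  · exact (eq_or_eq_inv_of_add_inv_eq_s6 hα0 hx0 (sub_eq_zero.mp h)).imp_right Or.inl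
  · exact Or.inr (Or.inr ⟨by linear_combination h, by linear_combination -qα + (α + α⁻¹) * h⟩)

def sqrtΔ₁Δ₂ (α x : L) : L := (α - α⁻¹) * (x - x⁻¹) * (α + α⁻¹ - (x + x⁻¹))

lemma sqrtΔ₁Δ₂_sq (hα : α ≠ 0) (hx : x ≠ 0) (hsum : α + α⁻¹ + (x + x⁻¹) = -A)
    (hprod : (α + α⁻¹) * (x + x⁻¹) = B - 2) :
    sqrtΔ₁Δ₂ α x ^ 2 = (A ^ 2 - 4 * (B - 2)) * ((B + 2) ^ 2 - 4 * A ^ 2) := by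
  obtain rfl : A = -(α + α⁻¹ + (x + x⁻¹)) := by linear_combination hsum
  obtain rfl : B = (α + α⁻¹) * (x + x⁻¹) + 2 := by linear_combination -hprod
  unfold sqrtΔ₁Δ₂
  field_simp
  ring

lemma sqrtΔ₁Δ₂_swap (α x : L) : sqrtΔ₁Δ₂ x α = -sqrtΔ₁Δ₂ α x := by
  unfold sqrtΔ₁Δ₂; ring

lemma map_sqrtΔ₁Δ₂ {M F : Type*} [Field M] [FunLike F L M] [RingHomClass F L M] (f : F) :
    f (sqrtΔ₁Δ₂ α x) = sqrtΔ₁Δ₂ (f α) (f x) := by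
  simp [sqrtΔ₁Δ₂, map_inv₀]

lemma mem_of_sqrtΔ₁Δ₂_mem {S : Type*} [SetLike S L] [SubfieldClass S L] {F : S} [NeZero (2 : L)]
    (hα : α ∈ F) (hA : A ∈ F) (hsum : α + α⁻¹ + (x + x⁻¹) = -A)
    (hE : sqrtΔ₁Δ₂ α x ∈ F) (hE0 : sqrtΔ₁Δ₂ α x ≠ 0) : x ∈ F := by
  have hsα : α + α⁻¹ ∈ F := add_mem hα (inv_mem hα)
  have hsx : x + x⁻¹ ∈ F := by
    rw [show x + x⁻¹ = -A - (α + α⁻¹) by linear_combination hsum]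
    exact sub_mem (neg_mem hA) hsα
  have hed : (α - α⁻¹) * (α + α⁻¹ - (x + x⁻¹)) ≠ 0 := by
    intro h; apply hE0; unfold sqrtΔ₁Δ₂; linear_combination (x - x⁻¹) * h
  have hdx : x - x⁻¹ ∈ F := by
    rw [show x - x⁻¹ = sqrtΔ₁Δ₂ α x / ((α - α⁻¹) * (α + α⁻¹ - (x + x⁻¹))) by
      rw [eq_div_iff hed]; unfold sqrtΔ₁Δ₂; ring]
    exact div_mem hE (mul_mem (sub_mem hα (inv_mem hα)) (sub_mem hsα hsx))
  rw [show x = ((x + x⁻¹) + (x - x⁻¹)) / 2 by rw [add_add_sub_cancel, add_self_div_two]]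
  exact div_mem (add_mem hsx hdx) (ofNat_mem F 2)

end Field

section Galois

open IntermediateField

variable {k K : Type*} [Field k] [Field K] [Algebra k K] {A B J : k}

lemma aeval_recipQuartic_eq_zero_iff {x : K} : aeval x (recipQuartic A B) = 0 ↔
    (recipQuartic (algebraMap k K A) (algebraMap k K B)).IsRoot x := by
  rw [aeval_def, eval₂_eq_eval_map, map_recipQuartic, IsRoot]

lemma exists_aeval_recipQuartic_eq_zero {P : k[X]} (hP : P = recipQuartic A B)
    [IsSplittingField k K P] : ∃ α : K, aeval α P = 0 := by
  subst hP
  obtain ⟨α, hα⟩ := (IsSplittingField.splits K (recipQuartic A B)).exists_eval_eq_zero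
    (by rw [degree_map, degree_eq_natDegree (monic_recipQuartic A B).ne_zero,
      natDegree_recipQuartic]; decide)
  exact ⟨α, by rwa [aeval_def, ← eval_map]⟩

lemma exists_sqrtΔ₁Δ₂_eq_algebraMap
    (hΔ : (A ^ 2 - 4 * (B - 2)) * ((B + 2) ^ 2 - 4 * A ^ 2) = J ^ 2) {α x : K}
    (hα : aeval α (recipQuartic A B) = 0) (hx : aeval x (recipQuartic A B) = 0)
    (hxα : x ≠ α) (hxα' : x ≠ α⁻¹) :
    α + α⁻¹ + (x + x⁻¹) = -algebraMap k K A ∧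
      ∃ c : k, (c = J ∨ c = -J) ∧ sqrtΔ₁Δ₂ α x = algebraMap k K c := by
  rw [aeval_recipQuartic_eq_zero_iff] at hα hx
  obtain ⟨hsum, hprod⟩ := ((isRoot_recipQuartic_cases hα hx).resolve_left hxα).resolve_left hxα'
  refine ⟨hsum, ?_⟩
  have hsq : sqrtΔ₁Δ₂ α x ^ 2 = algebraMap k K J ^ 2 := by
    rw [sqrtΔ₁Δ₂_sq (ne_zero_of_isRoot_recipQuartic hα) (ne_zero_of_isRoot_recipQuartic hx) hsum
      hprod]
    simpa [map_ofNat] using congrArg (algebraMap k K) hΔ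
  rcases sq_eq_sq_iff_eq_or_eq_neg.mp hsq with h | h
  · exact ⟨J, Or.inl rfl, h⟩
  · exact ⟨-J, Or.inr rfl, by rw [h, map_neg]⟩

variable [NeZero (2 : K)]

theorem adjoin_root_recipQuartic_eq_top {P : k[X]} (hP : P = recipQuartic A B)
    [IsSplittingField k K P] (hΔ : (A ^ 2 - 4 * (B - 2)) * ((B + 2) ^ 2 - 4 * A ^ 2) = J ^ 2)
    (hJ : J ≠ 0) {α : K} (hα : aeval α P = 0) : k⟮α⟯ = ⊤ := by
  subst hP
  have hαF : α ∈ k⟮α⟯ := mem_adjoin_simple_self k α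
  have hroots : (recipQuartic A B).rootSet K ⊆ k⟮α⟯ := by
    intro x hx
    replace hx := aeval_eq_zero_of_mem_rootSet hx
    by_cases hxα : x = α
    · rwa [hxα]
    by_cases hxα' : x = α⁻¹
    · rw [hxα']; exact inv_mem hαF
    obtain ⟨hsum, c, hc, hE⟩ := exists_sqrtΔ₁Δ₂_eq_algebraMap hΔ hα hx hxα hxα'
    refine mem_of_sqrtΔ₁Δ₂_mem hαF (IntermediateField.algebraMap_mem _ A) hsum
      (hE ▸ IntermediateField.algebraMap_mem _ c) ?_
    rw [hE, _root_.map_ne_zero]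
    rcases hc with rfl | rfl <;> simpa using hJ
  rw [eq_top_iff, ← toSubalgebra_le_toSubalgebra, top_toSubalgebra,
    ← IsSplittingField.adjoin_rootSet K (recipQuartic A B), Algebra.adjoin_le_iff]
  exact hroots

theorem finrank_eq_four_of_recipQuartic {P : k[X]} (hP : P = recipQuartic A B)
    [IsSplittingField k K P] (hirr : Irreducible P)
    (hΔ : (A ^ 2 - 4 * (B - 2)) * ((B + 2) ^ 2 - 4 * A ^ 2) = J ^ 2) (hJ : J ≠ 0) :
    Module.finrank k K = 4 := by
  obtain ⟨α, hα⟩ := exists_aeval_recipQuartic_eq_zero (K := K) hP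
  subst hP
  have hmin : minpoly k α = recipQuartic A B :=
    (minpoly.eq_of_irreducible_of_monic hirr hα (monic_recipQuartic A B)).symm
  rw [← finrank_top', ← adjoin_root_recipQuartic_eq_top rfl hΔ hJ hα,
    adjoin.finrank ⟨_, monic_recipQuartic A B, hα⟩, hmin, natDegree_recipQuartic]

theorem exists_aut_sq_ne_one_of_recipQuartic {P : k[X]} (hP : P = recipQuartic A B)
    [IsSplittingField k K P] [IsGalois k K] (hirr : Irreducible P)
    (hΔ : (A ^ 2 - 4 * (B - 2)) * ((B + 2) ^ 2 - 4 * A ^ 2) = J ^ 2) (hJ : J ≠ 0) :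
    ∃ σ : Gal(K/k), σ ^ 2 ≠ 1 := by
  classical
  have : FiniteDimensional k K := IsSplittingField.finiteDimensional K P
  obtain ⟨α, hα⟩ := exists_aeval_recipQuartic_eq_zero (K := K) hP
  subst hP
  have hadj : Algebra.adjoin k {α} = ⊤ := by
    rw [← adjoin_simple_toSubalgebra_of_isAlgebraic ⟨_, (monic_recipQuartic A B).ne_zero, hα⟩,
      adjoin_root_recipQuartic_eq_top rfl hΔ hJ hα, top_toSubalgebra]
  have hinj : Function.Injective fun σ : Gal(K/k) ↦ σ α := fun σ τ h ↦
    AlgEquiv.coe_toAlgHom_injective (AlgHom.ext_of_adjoin_eq_top hadj (by simpa using h))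
  obtain ⟨σ, hσα, hσα'⟩ : ∃ σ : Gal(K/k), σ α ≠ α ∧ σ α ≠ α⁻¹ := by
    by_contra! h
    have hle := Finset.card_le_card_of_injOn (fun σ : Gal(K/k) ↦ σ α) (s := Finset.univ)
      (t := {α, α⁻¹}) (fun σ _ ↦ by simpa using (em (σ α = α)).imp_right (h σ)) hinj.injOn
    rw [Finset.card_univ, ← Nat.card_eq_fintype_card, IsGalois.card_aut_eq_finrank,
      finrank_eq_four_of_recipQuartic rfl hirr hΔ hJ] at hle
    exact absurd (hle.trans Finset.card_le_two) (by norm_num)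
  refine ⟨σ, fun hσ2 ↦ ?_⟩
  have hσσ : σ (σ α) = α := by rw [← AlgEquiv.mul_apply, ← sq, hσ2, AlgEquiv.one_apply]
  obtain ⟨-, c, hc, hE⟩ :=
    exists_sqrtΔ₁Δ₂_eq_algebraMap hΔ hα (by rw [aeval_algHom_apply, hα, map_zero]) hσα hσα'
  have hσE : σ (sqrtΔ₁Δ₂ α (σ α)) = -sqrtΔ₁Δ₂ α (σ α) := by
    rw [map_sqrtΔ₁Δ₂, hσσ, sqrtΔ₁Δ₂_swap]
  rw [hE, AlgEquiv.commutes] at hσE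
  have hc0 : algebraMap k K c = 0 :=
    (mul_eq_zero.mp (by linear_combination hσE : (2 : K) * algebraMap k K c = 0)).resolve_left
      two_ne_zero
  rcases hc with rfl | rfl <;> simp [hJ] at hc0

end Galois

lemma isCyclic_of_card_eq_four {G : Type*} [Group G] (hcard : Nat.card G = 4) {g : G}
    (hg : g ^ 2 ≠ 1) : IsCyclic G := by
  have : Finite G := Nat.finite_of_card_ne_zero (by omega)
  refine isCyclic_of_orderOf_eq_card g ?_
  rw [hcard]
  exact orderOf_eq_prime_pow (p := 2) (n := 1) (by simpa using hg)
    (by simp [← hcard, pow_card_eq_one'])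

/-- If the reciprocal quartic `P = x⁴ + a x³ + b x² + a x + 1` is irreducible
over `ℚ`, neither `Δ₁ = a² − 4(b − 2)` nor `Δ₂ = (b + 2)² − 4a²` is a perfect square, and
`Δ₁Δ₂` is a perfect square, then the splitting field of `P` has degree `4` over `ℚ` and the
Galois group is cyclic of order `4`. -/
theorem stmt_6 (a b : ℤ) (P : Polynomial ℚ)
    (hP : P = X ^ 4 + C (a : ℚ) * X ^ 3 + C (b : ℚ) * X ^ 2 + C (a : ℚ) * X + 1)
    (hirr : Irreducible P)
    (hΔ₁ : ¬ ∃ j : ℤ, a ^ 2 - 4 * (b - 2) = j ^ 2)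
    (hΔ₂ : ¬ ∃ j : ℤ, (b + 2) ^ 2 - 4 * a ^ 2 = j ^ 2)
    (hΔ₁₂ : ∃ j : ℤ, (a ^ 2 - 4 * (b - 2)) * ((b + 2) ^ 2 - 4 * a ^ 2) = j ^ 2) :
    Module.finrank ℚ P.SplittingField = 4 ∧
      Nonempty (P.Gal ≃* Multiplicative (ZMod 4)) := by
  replace hP : P = recipQuartic (a : ℚ) b := hP
  obtain ⟨j, hj⟩ := hΔ₁₂
  have hj0 : (j : ℚ) ≠ 0 := by
    rw [Int.cast_ne_zero]
    rintro rfl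
    rcases mul_eq_zero.mp (hj.trans (zero_pow two_ne_zero)) with h | h
    exacts [hΔ₁ ⟨0, by rw [h]; rfl⟩, hΔ₂ ⟨0, by rw [h]; rfl⟩]
  have hΔ : ((a : ℚ) ^ 2 - 4 * (b - 2)) * ((b + 2) ^ 2 - 4 * a ^ 2) = (j : ℚ) ^ 2 := by
    exact_mod_cast hj
  -- Instance search equips `P.SplittingField` with `DivisionRing.toRatAlgebra`, so the
  -- splitting-field instance has to be restated for that algebra structure.
  have : IsSplittingField ℚ P.SplittingField P := IsSplittingField.splittingField P
  have hfin : Module.finrank ℚ P.SplittingField = 4 :=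
    finrank_eq_four_of_recipQuartic hP hirr hΔ hj0
  have : IsGalois ℚ P.SplittingField :=
    IsGalois.of_separable_splitting_field hirr.separable
  obtain ⟨σ, hσ⟩ : ∃ σ : Gal(P.SplittingField/ℚ), σ ^ 2 ≠ 1 :=
    exists_aut_sq_ne_one_of_recipQuartic hP hirr hΔ hj0
  have hcard : Nat.card Gal(P.SplittingField/ℚ) = 4 :=
    (IsGalois.card_aut_eq_finrank _ _).trans hfin
  exact ⟨hfin, ⟨hcard ▸ (zmodCyclicMulEquiv (isCyclic_of_card_eq_four hcard hσ)).symm⟩⟩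
end

section
/- Call a matrix M = (a b; c d) ∈ SL(2,ℤ) t-reduced if 0 < a, a ≤ b, a ≤ c, b < d and c < d. Then: (i) the product of two t-reduced matrices is t-reduced; (ii) if M₀ and M₁ are t-reduced with bottom-right entries q₀ and q₁ respectively, then the bottom-right entry q of M₀M₁ satisfies q₀q₁ ≤ q ≤ 2q₀q₁; (iii) if M = (p′ p; q′ q) ∈ SL(2,ℤ) is t-reduced, then (p + p′)/(q + q′) − p/q = 1/(q(q + q′)), and 1/(2q²) ≤ 1/(q(q + q′)) ≤ 1/q². -/
/-- A matrix `(a b; c d) ∈ SL(2, ℤ)` is *t-reduced* if `0 < a`, `a ≤ b`, `a ≤ c`, `b < d`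
and `c < d`. -/
def TReduced (M : Matrix.SpecialLinearGroup (Fin 2) ℤ) : Prop :=
  0 < M 0 0 ∧ M 0 0 ≤ M 0 1 ∧ M 0 0 ≤ M 1 0 ∧ M 0 1 < M 1 1 ∧ M 1 0 < M 1 1

/-!
The entries of a t-reduced matrix are positive, with the top-left one smallest and the
bottom-right one largest. Writing the entries of `M₀ M₁` as sums `x₀ y₁ + z₀ w₁`, each inequality
defining t-reducedness of the product follows by comparing the two summands termwise, and
`q = c₀ b₁ + q₀ q₁` with `0 < c₀ b₁ < q₀ q₁` gives `q₀ q₁ ≤ q ≤ 2 q₀ q₁`. Part (iii) is the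
mediant identity `(b + a)/(d + c) - b/d = (ad - bc)/(d(d + c))` together with `d ≤ d + c ≤ 2d`.
-/

namespace Matrix.SpecialLinearGroup

variable {R : Type*} [CommRing R]

theorem mul_apply_fin_two (A B : SpecialLinearGroup (Fin 2) R) (i j : Fin 2) :
    (A * B) i j = A i 0 * B 0 j + A i 1 * B 1 j := by
  rw [coe_mul, Matrix.mul_apply, Fin.sum_univ_two]

theorem det_fin_two_eq_one (A : SpecialLinearGroup (Fin 2) R) :
    A 0 0 * A 1 1 - A 0 1 * A 1 0 = 1 := by
  rw [← det_fin_two, det_coe]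

end Matrix.SpecialLinearGroup

section Mediant

variable {K : Type*} [Field K]

theorem mediant_sub_div_eq {a b c d : K} (hdet : a * d - b * c = 1) (hd : d ≠ 0)
    (hdc : d + c ≠ 0) : (b + a) / (d + c) - b / d = 1 / (d * (d + c)) := by
  field_simp
  linear_combination hdet

variable [LinearOrder K] [IsStrictOrderedRing K]

theorem one_div_two_mul_sq_le_one_div_mul_add {c d : K} (hd : 0 < d) (hc : 0 ≤ c)
    (hcd : c ≤ d) : 1 / (2 * d ^ 2) ≤ 1 / (d * (d + c)) :=
  one_div_le_one_div_of_le (by positivity) (by nlinarith)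

theorem one_div_mul_add_le_one_div_sq {c d : K} (hd : 0 < d) (hc : 0 ≤ c) :
    1 / (d * (d + c)) ≤ 1 / d ^ 2 :=
  one_div_le_one_div_of_le (by positivity) (by nlinarith)

end Mediant

open Matrix.SpecialLinearGroup

namespace TReduced

variable {M M₀ M₁ : Matrix.SpecialLinearGroup (Fin 2) ℤ}

theorem zero_one_pos (h : TReduced M) : 0 < M 0 1 := h.1.trans_le h.2.1

theorem one_zero_pos (h : TReduced M) : 0 < M 1 0 := h.1.trans_le h.2.2.1

theorem one_one_pos (h : TReduced M) : 0 < M 1 1 := h.zero_one_pos.trans h.2.2.2.1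

theorem mul (h₀ : TReduced M₀) (h₁ : TReduced M₁) : TReduced (M₀ * M₁) := by
  have b₀ := h₀.zero_one_pos
  have c₀ := h₀.one_zero_pos
  have d₀ := h₀.one_one_pos
  have b₁ := h₁.zero_one_pos
  have c₁ := h₁.one_zero_pos
  have d₁ := h₁.one_one_pos
  obtain ⟨a₀, ab₀, ac₀, bd₀, cd₀⟩ := h₀
  obtain ⟨a₁, ab₁, ac₁, bd₁, cd₁⟩ := h₁
  simp only [TReduced, mul_apply_fin_two]
  exact ⟨add_pos (mul_pos a₀ a₁) (mul_pos b₀ c₁),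
    add_le_add (mul_le_mul_of_nonneg_left ab₁ a₀.le) (mul_le_mul_of_nonneg_left cd₁.le b₀.le),
    add_le_add (mul_le_mul_of_nonneg_right ac₀ a₁.le) (mul_le_mul_of_nonneg_right bd₀.le c₁.le),
    add_lt_add_of_le_of_lt (mul_le_mul_of_nonneg_right ac₀ b₁.le) (mul_lt_mul_of_pos_right bd₀ d₁),
    add_lt_add_of_le_of_lt (mul_le_mul_of_nonneg_left ab₁ c₀.le) (mul_lt_mul_of_pos_left cd₁ d₀)⟩

theorem le_mul_apply_one_one (h₀ : TReduced M₀) (h₁ : TReduced M₁) :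
    M₀ 1 1 * M₁ 1 1 ≤ (M₀ * M₁) 1 1 := by
  rw [mul_apply_fin_two]
  have := mul_pos h₀.one_zero_pos h₁.zero_one_pos
  linarith

theorem mul_apply_one_one_lt (h₀ : TReduced M₀) (h₁ : TReduced M₁) :
    (M₀ * M₁) 1 1 < 2 * (M₀ 1 1 * M₁ 1 1) := by
  rw [mul_apply_fin_two]
  have := mul_lt_mul'' h₀.2.2.2.2 h₁.2.2.2.1 h₀.one_zero_pos.le h₁.zero_one_pos.le
  linarith

end TReduced

/-- (i) The product of two t-reduced matrices is t-reduced; (ii) the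
bottom-right entry `q` of the product satisfies `q₀q₁ ≤ q ≤ 2q₀q₁`; (iii) if
`M = (p′ p; q′ q)` is t-reduced then `(p+p′)/(q+q′) − p/q = 1/(q(q+q′))` and
`1/(2q²) ≤ 1/(q(q+q′)) ≤ 1/q²`. -/
theorem stmt_9 :
    (∀ M₀ M₁ : Matrix.SpecialLinearGroup (Fin 2) ℤ,
      TReduced M₀ → TReduced M₁ → TReduced (M₀ * M₁)) ∧
    (∀ M₀ M₁ : Matrix.SpecialLinearGroup (Fin 2) ℤ, TReduced M₀ → TReduced M₁ →
      M₀ 1 1 * M₁ 1 1 ≤ (M₀ * M₁) 1 1 ∧ (M₀ * M₁) 1 1 ≤ 2 * (M₀ 1 1 * M₁ 1 1)) ∧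
    (∀ M : Matrix.SpecialLinearGroup (Fin 2) ℤ, TReduced M →
      ((M 0 1 : ℚ) + (M 0 0 : ℚ)) / ((M 1 1 : ℚ) + (M 1 0 : ℚ)) - (M 0 1 : ℚ) / (M 1 1 : ℚ) =
          1 / ((M 1 1 : ℚ) * ((M 1 1 : ℚ) + (M 1 0 : ℚ))) ∧
        1 / (2 * (M 1 1 : ℚ) ^ 2) ≤ 1 / ((M 1 1 : ℚ) * ((M 1 1 : ℚ) + (M 1 0 : ℚ))) ∧
        1 / ((M 1 1 : ℚ) * ((M 1 1 : ℚ) + (M 1 0 : ℚ))) ≤ 1 / (M 1 1 : ℚ) ^ 2) := by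
  refine ⟨fun _ _ ↦ TReduced.mul, fun _ _ h₀ h₁ ↦
    ⟨h₀.le_mul_apply_one_one h₁, (h₀.mul_apply_one_one_lt h₁).le⟩, fun M h ↦ ?_⟩
  have hd : (0 : ℚ) < M 1 1 := by exact_mod_cast h.one_one_pos
  have hc : (0 : ℚ) ≤ M 1 0 := by exact_mod_cast h.one_zero_pos.le
  have hcd : (M 1 0 : ℚ) ≤ M 1 1 := by exact_mod_cast h.2.2.2.2.le
  have hdet : (M 0 0 : ℚ) * M 1 1 - M 0 1 * M 1 0 = 1 := by exact_mod_cast det_fin_two_eq_one M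
  exact ⟨mediant_sub_div_eq hdet hd.ne' (by positivity),
    one_div_two_mul_sq_le_one_div_mul_add hd hc hcd, one_div_mul_add_le_one_div_sq hd hc⟩
end

section
/- For all integers m, n ≥ 2, set k = (m−1)(n−1) and consider the matrices A = (1+k, 1−n; 1−m, 1) and B = (1+4k, 2(1−n); 2(1−m), 1). Then A and B belong to SL(2,ℤ), tr(A) = k + 2 and tr(B) = 4k + 2, the discriminants tr(A)² − 4 = k(k+4) and tr(B)² − 4 = 16k(k+1) are positive integers that are not perfect squares (so each of A and B has two distinct real irrational eigenvalues), and moreover (k+1)(k+4) is not a perfect square, so that √(k(k+4)) and √(k(k+1)) generate distinct real quadratic extensions of ℚ whose intersection is ℚ. -/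
open Polynomial IntermediateField Module

/-! For `k ≥ 1` each of `k (k + 4)`, `16 k (k + 1)`, `(k + 1) (k + 4)` and `k (k + 1)` lies strictly
between two consecutive squares, so none is a square. Hence `√(k (k + 4))` and `√(k (k + 1))` are
irrational and each generates a quadratic field. If one lay in the field of the other, then
`√(k (k + 1))` or the product `√(k (k + 4)) √(k (k + 1)) = k √((k + 1) (k + 4))` would be
rational, which it is not. Two distinct fields of prime degree meet in `ℚ`. -/

theorem Int.not_exists_sq_of_sq_lt_of_lt_sq {a N : ℤ} (ha : 0 ≤ a) (hlo : a ^ 2 < N)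
    (hhi : N < (a + 1) ^ 2) : ¬ ∃ j : ℤ, N = j ^ 2 := by
  rintro ⟨j, rfl⟩
  rw [← sq_abs j] at hlo hhi
  have hlt : a < |j| := (pow_lt_pow_iff_left₀ ha (abs_nonneg j) two_ne_zero).mp hlo
  have hlt' : |j| < a + 1 := (pow_lt_pow_iff_left₀ (abs_nonneg j) (by omega) two_ne_zero).mp hhi
  omega

section NonSquares

variable {k : ℤ}

theorem not_exists_sq_mul_add_one (hk : 1 ≤ k) : ¬ ∃ j : ℤ, k * (k + 1) = j ^ 2 :=
  Int.not_exists_sq_of_sq_lt_of_lt_sq (a := k) (by omega) (by nlinarith) (by nlinarith)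

theorem not_exists_sq_mul_add_four (hk : 1 ≤ k) : ¬ ∃ j : ℤ, k * (k + 4) = j ^ 2 :=
  Int.not_exists_sq_of_sq_lt_of_lt_sq (a := k + 1) (by omega) (by nlinarith) (by nlinarith)

theorem not_exists_sq_add_one_mul_add_four (hk : 1 ≤ k) :
    ¬ ∃ j : ℤ, (k + 1) * (k + 4) = j ^ 2 :=
  Int.not_exists_sq_of_sq_lt_of_lt_sq (a := k + 2) (by omega) (by nlinarith) (by nlinarith)

theorem not_exists_sq_sixteen_mul_mul_add_one (hk : 1 ≤ k) :
    ¬ ∃ j : ℤ, 16 * (k * (k + 1)) = j ^ 2 :=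
  Int.not_exists_sq_of_sq_lt_of_lt_sq (a := 4 * k + 1) (by omega) (by nlinarith) (by nlinarith)

end NonSquares

theorem irrational_sqrt_of_not_exists_sq {d : ℤ} (hd : 0 ≤ d) (h : ¬ ∃ j : ℤ, d = j ^ 2) :
    Irrational √(d : ℝ) :=
  (irrational_sqrt_intCast_iff_of_nonneg hd).mpr fun ⟨j, hj⟩ ↦ h ⟨j, by rw [hj, sq]⟩

theorem sq_sqrt_intCast {d : ℤ} (hd : 0 ≤ d) : √(d : ℝ) ^ 2 = ((d : ℚ) : ℝ) := by
  rw [Real.sq_sqrt (by exact_mod_cast hd), Rat.cast_intCast]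

theorem Matrix.isRoot_charpoly_fin_two {N : Matrix (Fin 2) (Fin 2) ℝ} {s : ℝ}
    (hs : s ^ 2 = N.trace ^ 2 - 4 * N.det) : N.charpoly.IsRoot ((N.trace + s) / 2) := by
  rw [charpoly_fin_two, IsRoot, eval_add, eval_sub, eval_mul, eval_pow, eval_X, eval_C, eval_C]
  linear_combination hs / 4

theorem Matrix.exists_ne_irrational_isRoot_charpoly (M : Matrix (Fin 2) (Fin 2) ℤ)
    (hpos : 0 < M.trace ^ 2 - 4 * M.det) (hns : ¬ ∃ j : ℤ, M.trace ^ 2 - 4 * M.det = j ^ 2) :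
    ∃ x y : ℝ, x ≠ y ∧ Irrational x ∧ Irrational y ∧
      (M.map ((↑) : ℤ → ℝ)).charpoly.IsRoot x ∧ (M.map ((↑) : ℤ → ℝ)).charpoly.IsRoot y := by
  set s := √((M.trace ^ 2 - 4 * M.det : ℤ) : ℝ)
  have htr : (M.map ((↑) : ℤ → ℝ)).trace = M.trace :=
    (AddMonoidHom.map_trace (Int.castAddHom ℝ) M).symm
  have hdet : (M.map ((↑) : ℤ → ℝ)).det = M.det := (RingHom.map_det (Int.castRingHom ℝ) M).symm
  have hs : s ^ 2 = (M.map ((↑) : ℤ → ℝ)).trace ^ 2 - 4 * (M.map ((↑) : ℤ → ℝ)).det := by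
    rw [Real.sq_sqrt (by exact_mod_cast hpos.le), htr, hdet]
    push_cast; rfl
  have hs_pos : 0 < s := Real.sqrt_pos.mpr (by exact_mod_cast hpos)
  have hirr : Irrational s := irrational_sqrt_of_not_exists_sq hpos.le hns
  refine ⟨_, _, ?_, ?_, ?_, isRoot_charpoly_fin_two hs,
    isRoot_charpoly_fin_two (s := -s) (by rw [neg_sq, hs])⟩
  · intro h; linarith
  · rw [htr]; exact ((hirr.intCast_add _).div_natCast two_ne_zero)
  · rw [htr]; exact ((hirr.neg.intCast_add _).div_natCast two_ne_zero)

section QuadraticSubfields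

variable {α : ℝ} {c : ℚ}

theorem isIntegral_of_sq_eq_ratCast (hα : α ^ 2 = c) : IsIntegral ℚ α :=
  ⟨X ^ 2 - C c, monic_X_pow_sub_C _ two_ne_zero, by simp [hα]⟩

theorem natDegree_minpoly_le_two_of_sq_eq_ratCast (hα : α ^ 2 = c) :
    (minpoly ℚ α).natDegree ≤ 2 :=
  calc (minpoly ℚ α).natDegree ≤ (X ^ 2 - C c).natDegree :=
        natDegree_le_of_dvd (minpoly.dvd ℚ α (by simp [hα]))
          (monic_X_pow_sub_C _ two_ne_zero).ne_zero
    _ = 2 := natDegree_X_pow_sub_C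

theorem finrank_adjoin_of_sq_eq_ratCast (hα : α ^ 2 = c) (hirr : Irrational α) :
    finrank ℚ ℚ⟮α⟯ = 2 := by
  have hint := isIntegral_of_sq_eq_ratCast hα
  rw [adjoin.finrank hint]
  refine le_antisymm (natDegree_minpoly_le_two_of_sq_eq_ratCast hα)
    ((minpoly.two_le_natDegree_iff hint).mpr ?_)
  rintro ⟨q, rfl⟩
  exact hirr ⟨q, (eq_ratCast _ q).symm⟩

theorem exists_eq_add_mul_of_mem_adjoin (hα : α ^ 2 = c) {x : ℝ} (hx : x ∈ ℚ⟮α⟯) :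
    ∃ p q : ℚ, x = p + q * α := by
  let pb := adjoin.powerBasis (isIntegral_of_sq_eq_ratCast hα)
  obtain ⟨f, hf_deg, hf⟩ := pb.exists_eq_aeval ⟨x, hx⟩
  have hf_le : f.natDegree ≤ 1 := by
    have := natDegree_minpoly_le_two_of_sq_eq_ratCast hα
    simp only [pb, adjoin.powerBasis_dim] at hf_deg
    omega
  rw [eq_X_add_C_of_natDegree_le_one hf_le] at hf
  refine ⟨f.coeff 0, f.coeff 1, ?_⟩
  have := congrArg Subtype.val hf
  simpa [pb, add_comm, Algebra.smul_def] using this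

/-- Squaring `β = p + q α` shows `2 p q α ∈ ℚ`; so `q = 0`, or `p = 0`, or `α ∈ ℚ`,
and in each case `β` or `α β = p α + q c` is rational. -/
theorem not_mem_adjoin_of_sq_eq_ratCast {β : ℝ} {b : ℚ} (hα : α ^ 2 = c) (hβ : β ^ 2 = b)
    (hβ_irr : Irrational β) (hαβ_irr : Irrational (α * β)) : β ∉ ℚ⟮α⟯ := by
  intro hβ_mem
  obtain ⟨p, q, rfl⟩ := exists_eq_add_mul_of_mem_adjoin hα hβ_mem
  have hαβ : α * (p + q * α) = p * α + q * c := by rw [← hα]; ring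
  have hsq : 2 * p * q * α = b - p ^ 2 - q ^ 2 * c := by rw [← hβ, ← hα]; ring
  rcases eq_or_ne q 0 with rfl | hq
  · exact hβ_irr ⟨p, by simp⟩
  rcases eq_or_ne p 0 with rfl | hp
  · exact hαβ_irr ⟨q * c, by rw [hαβ]; push_cast; ring⟩
  have hα_eq : α = ((b - p ^ 2 - q ^ 2 * c) / (2 * p * q) : ℚ) := by
    push_cast
    rw [← hsq]
    field_simp
  exact hαβ_irr ⟨p * ((b - p ^ 2 - q ^ 2 * c) / (2 * p * q)) + q * c, by
    rw [hαβ, hα_eq]; push_cast; ring⟩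

end QuadraticSubfields

theorem IntermediateField.inf_eq_bot_of_finrank_eq_prime {K L : Type*} [Field K] [Field L]
    [Algebra K L] {F E : IntermediateField K L} {p : ℕ} (hp : p.Prime) (hF : finrank K F = p)
    (hE : finrank K E = p) (hne : F ≠ E) : F ⊓ E = ⊥ := by
  have : FiniteDimensional K F := Module.finite_of_finrank_pos (hF ▸ hp.pos)
  have : FiniteDimensional K E := Module.finite_of_finrank_pos (hE ▸ hp.pos)
  rcases (Nat.dvd_prime hp).mp (hF ▸ finrank_dvd_of_le_right inf_le_left) with h | h
  · exact finrank_eq_one_iff.mp h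
  · exact absurd ((eq_of_le_of_finrank_eq inf_le_left (h.trans hF.symm)).symm.trans
      (eq_of_le_of_finrank_eq inf_le_right (h.trans hE.symm))) hne

theorem irrational_sqrt_mul_add_four_mul_sqrt_mul_add_one {k : ℤ} (hk : 1 ≤ k) :
    Irrational (√((k * (k + 4) : ℤ) : ℝ) * √((k * (k + 1) : ℤ) : ℝ)) := by
  have hkR : (1 : ℝ) ≤ k := by exact_mod_cast hk
  have h : √((k * (k + 4) : ℤ) : ℝ) * √((k * (k + 1) : ℤ) : ℝ)
      = k * √(((k + 1) * (k + 4) : ℤ) : ℝ) := by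
    push_cast
    rw [← Real.sqrt_mul (by positivity),
      show (k * (k + 4) * (k * (k + 1)) : ℝ) = k ^ 2 * ((k + 1) * (k + 4)) by ring,
      Real.sqrt_mul (by positivity), Real.sqrt_sq (by positivity)]
  rw [h]
  exact (irrational_sqrt_of_not_exists_sq (by positivity)
    (not_exists_sq_add_one_mul_add_four hk)).intCast_mul (by omega)

/-- For integers `m, n ≥ 2` and `k = (m−1)(n−1)`, the matrices
`A = (1+k, 1−n; 1−m, 1)` and `B = (1+4k, 2(1−n); 2(1−m), 1)` lie in `SL(2,ℤ)`, have traces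
`k+2` and `4k+2`, the discriminants `tr(A)² − 4 = k(k+4)` and `tr(B)² − 4 = 16k(k+1)` are
positive non-squares (so `A` and `B` each have two distinct real irrational eigenvalues),
`(k+1)(k+4)` is not a perfect square, and `√(k(k+4))` and `√(k(k+1))` generate distinct real
quadratic extensions of `ℚ` intersecting in `ℚ`. -/
theorem stmt_10 (m n : ℤ) (hm : 2 ≤ m) (hn : 2 ≤ n)
    (k : ℤ) (hk : k = (m - 1) * (n - 1))
    (A B : Matrix (Fin 2) (Fin 2) ℤ)
    (hA : A = !![1 + k, 1 - n; 1 - m, 1])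
    (hB : B = !![1 + 4 * k, 2 * (1 - n); 2 * (1 - m), 1])
    (F₁ F₂ : IntermediateField ℚ ℝ)
    (hF₁ : F₁ = IntermediateField.adjoin ℚ {Real.sqrt ((k * (k + 4) : ℤ) : ℝ)})
    (hF₂ : F₂ = IntermediateField.adjoin ℚ {Real.sqrt ((k * (k + 1) : ℤ) : ℝ)}) :
    A.det = 1 ∧ B.det = 1 ∧
    A.trace = k + 2 ∧ B.trace = 4 * k + 2 ∧
    A.trace ^ 2 - 4 = k * (k + 4) ∧ B.trace ^ 2 - 4 = 16 * (k * (k + 1)) ∧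
    0 < k * (k + 4) ∧ (¬ ∃ j : ℤ, k * (k + 4) = j ^ 2) ∧
    0 < 16 * (k * (k + 1)) ∧ (¬ ∃ j : ℤ, 16 * (k * (k + 1)) = j ^ 2) ∧
    (∃ x y : ℝ, x ≠ y ∧ Irrational x ∧ Irrational y ∧
      (Matrix.charpoly (A.map ((↑) : ℤ → ℝ))).IsRoot x ∧
      (Matrix.charpoly (A.map ((↑) : ℤ → ℝ))).IsRoot y) ∧
    (∃ x y : ℝ, x ≠ y ∧ Irrational x ∧ Irrational y ∧
      (Matrix.charpoly (B.map ((↑) : ℤ → ℝ))).IsRoot x ∧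
      (Matrix.charpoly (B.map ((↑) : ℤ → ℝ))).IsRoot y) ∧
    (¬ ∃ j : ℤ, (k + 1) * (k + 4) = j ^ 2) ∧
    Module.finrank ℚ F₁ = 2 ∧ Module.finrank ℚ F₂ = 2 ∧ F₁ ≠ F₂ ∧ F₁ ⊓ F₂ = ⊥ := by
  have hk1 : 1 ≤ k := by rw [hk]; nlinarith
  have hdetA : A.det = 1 := by rw [hA, Matrix.det_fin_two_of, hk]; ring
  have hdetB : B.det = 1 := by rw [hB, Matrix.det_fin_two_of, hk]; ring
  have htrA : A.trace = k + 2 := by rw [hA, Matrix.trace_fin_two_of]; ring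
  have htrB : B.trace = 4 * k + 2 := by rw [hB, Matrix.trace_fin_two_of]; ring
  have hdiscA : A.trace ^ 2 - 4 * A.det = k * (k + 4) := by rw [htrA, hdetA]; ring
  have hdiscB : B.trace ^ 2 - 4 * B.det = 16 * (k * (k + 1)) := by rw [htrB, hdetB]; ring
  have hposA : 0 < k * (k + 4) := by positivity
  have hposB : 0 < 16 * (k * (k + 1)) := by positivity
  have hnsA := not_exists_sq_mul_add_four hk1
  have hnsB := not_exists_sq_sixteen_mul_mul_add_one hk1
  have hns₂ := not_exists_sq_mul_add_one hk1
  have hsq₁ := sq_sqrt_intCast hposA.le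
  have hsq₂ := sq_sqrt_intCast (by positivity : 0 ≤ k * (k + 1))
  have hfr₁ : finrank ℚ F₁ = 2 :=
    hF₁ ▸ finrank_adjoin_of_sq_eq_ratCast hsq₁ (irrational_sqrt_of_not_exists_sq hposA.le hnsA)
  have hfr₂ : finrank ℚ F₂ = 2 :=
    hF₂ ▸ finrank_adjoin_of_sq_eq_ratCast hsq₂
      (irrational_sqrt_of_not_exists_sq (by positivity) hns₂)
  have hne : F₁ ≠ F₂ := fun h ↦ not_mem_adjoin_of_sq_eq_ratCast hsq₁ hsq₂
    (irrational_sqrt_of_not_exists_sq (by positivity) hns₂)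
    (irrational_sqrt_mul_add_four_mul_sqrt_mul_add_one hk1)
    (hF₁ ▸ h ▸ hF₂ ▸ mem_adjoin_simple_self ℚ _)
  refine ⟨hdetA, hdetB, htrA, htrB, by rw [htrA]; ring, by rw [htrB]; ring, hposA, hnsA, hposB,
    hnsB, ?_, ?_, not_exists_sq_add_one_mul_add_four hk1, hfr₁, hfr₂, hne,
    inf_eq_bot_of_finrank_eq_prime Nat.prime_two hfr₁ hfr₂ hne⟩
  · exact A.exists_ne_irrational_isRoot_charpoly (hdiscA ▸ hposA) (hdiscA ▸ hnsA)
  · exact B.exists_ne_irrational_isRoot_charpoly (hdiscB ▸ hposB) (hdiscB ▸ hnsB)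
end

section
/- Let M_S and M_T be the linear maps of ℝ⁴ whose action on the standard orthonormal basis (ε₁, ε₂, ε₃, ε₄) is given by: M_S(ε₁) = ½(ε₁+ε₂+ε₃+ε₄), M_S(ε₂) = ½(ε₁+ε₂−ε₃−ε₄), M_S(ε₃) = ½(−ε₁+ε₂+ε₃−ε₄), M_S(ε₄) = ½(−ε₁+ε₂−ε₃+ε₄); and M_T(ε₁) = ½(ε₁+ε₂+ε₃−ε₄), M_T(ε₂) = ½(−ε₁+ε₂+ε₃+ε₄), M_T(ε₃) = ½(ε₁−ε₂+ε₃+ε₄), M_T(ε₄) = ½(ε₁+ε₂−ε₃+ε₄). Then M_S and M_T are orthogonal transformations of ℝ⁴ (they preserve the standard inner product), each maps the root system R = {±ε_a ± ε_b : 1 ≤ a < b ≤ 4} of type D₄ bijectively onto itself, and consequently the subgroup of GL(4,ℝ) generated by M_S and M_T is finite. -/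
/-!
The matrices of `M_S` and `M_T` have all entries `±1/2` and orthonormal columns. A root
`s • ε a + t • ε b` (`s, t = ±1`, `a ≠ b`) is sent to the signed sum of two columns, whose entries are
`±1/2 ± 1/2 ∈ {-1, 0, 1}` and whose squared norm is still `2`; these two properties characterise
the roots among all vectors of `ℝ⁴`. Since the roots are finitely many and span `ℝ⁴`, a linear
automorphism preserving them is determined by the permutation it induces on them, so the group
generated by the two maps is finite.
-/

/-- The standard basis vector `ε i` of `ℝ⁴`. -/
def epsBasis (i : Fin 4) : Fin 4 → ℝ := Pi.single i 1

/-- The root system `R = {±ε_a ± ε_b : 1 ≤ a < b ≤ 4}` of type `D₄` in `ℝ⁴`. -/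
def D4Roots : Set (Fin 4 → ℝ) :=
  {v | ∃ a b : Fin 4, a < b ∧
    (v = epsBasis a + epsBasis b ∨ v = epsBasis a - epsBasis b ∨
      v = -epsBasis a + epsBasis b ∨ v = -epsBasis a - epsBasis b)}

open Matrix Set
open scoped Pointwise

theorem Matrix.dotProduct_mulVec_mulVec_of_transpose_mul_self {n R : Type*} [Fintype n]
    [DecidableEq n] [CommSemiring R] {A : Matrix n n R} (hA : Aᵀ * A = 1) (x y : n → R) :
    A *ᵥ x ⬝ᵥ A *ᵥ y = x ⬝ᵥ y := by
  rw [dotProduct_mulVec, ← vecMul_transpose, vecMul_vecMul, hA, vecMul_one]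

theorem Matrix.isUnit_toLin'_of_transpose_mul_self {n R : Type*} [Fintype n] [DecidableEq n]
    [CommRing R] {A : Matrix n n R} (hA : Aᵀ * A = 1) : IsUnit (toLin' A) :=
  isUnit_toLin'_iff.mpr (IsUnit.of_mul_eq_one_right _ hA)

theorem Module.End.finite_stabilizer_of_span_eq_top {R M : Type*} [Semiring R] [AddCommMonoid M]
    [Module R M] {s : Set M} (hs : s.Finite) (hspan : Submodule.span R s = ⊤) :
    (MulAction.stabilizer (Module.End R M)ˣ s : Set (Module.End R M)ˣ).Finite := by
  have : Finite s := hs.to_subtype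
  let restrict (u : MulAction.stabilizer (Module.End R M)ˣ s) : s → s :=
    fun x => ⟨u.1 • x.1, (MulAction.mem_stabilizer_set' hs).mp u.2 x.2⟩
  refine Set.finite_coe_iff.mp (_root_.Finite.of_injective restrict fun u v huv => ?_)
  exact Subtype.ext <| Units.ext <| LinearMap.ext_on hspan fun x hx =>
    congrArg Subtype.val (congrFun huv ⟨x, hx⟩)

theorem mem_D4Roots_iff_exists_ne {v : Fin 4 → ℝ} :
    v ∈ D4Roots ↔ ∃ a b, a ≠ b ∧ ∃ s t : ℝ, (s = 1 ∨ s = -1) ∧ (t = 1 ∨ t = -1) ∧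
      v = s • epsBasis a + t • epsBasis b := by
  constructor
  · rintro ⟨a, b, hab, rfl | rfl | rfl | rfl⟩
    · exact ⟨a, b, hab.ne, 1, 1, by simp⟩
    · exact ⟨a, b, hab.ne, 1, -1, by simp [sub_eq_add_neg]⟩
    · exact ⟨a, b, hab.ne, -1, 1, by simp⟩
    · exact ⟨a, b, hab.ne, -1, -1, by simp [sub_eq_add_neg]⟩
  · rintro ⟨a, b, hab, s, t, hs, ht, rfl⟩
    rcases hab.lt_or_gt with hab | hba
    · refine ⟨a, b, hab, ?_⟩
      rcases hs with rfl | rfl <;> rcases ht with rfl | rfl <;> simp [sub_eq_add_neg]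
    · refine ⟨b, a, hba, ?_⟩
      rcases hs with rfl | rfl <;> rcases ht with rfl | rfl <;> simp [sub_eq_add_neg, add_comm]

theorem apply_mem_of_mem_D4Roots {v : Fin 4 → ℝ} (hv : v ∈ D4Roots) (i : Fin 4) :
    v i ∈ ({-1, 0, 1} : Set ℝ) := by
  obtain ⟨a, b, hab, s, t, hs, ht, rfl⟩ := mem_D4Roots_iff_exists_ne.mp hv
  simp only [Pi.add_apply, Pi.smul_apply, epsBasis, Pi.single_apply, smul_eq_mul]
  by_cases hia : i = a <;> by_cases hib : i = b <;> simp_all <;> rcases hs with rfl | rfl <;>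
    rcases ht with rfl | rfl <;> norm_num

theorem dotProduct_self_of_mem_D4Roots {v : Fin 4 → ℝ} (hv : v ∈ D4Roots) : v ⬝ᵥ v = 2 := by
  obtain ⟨a, b, hab, s, t, hs, ht, rfl⟩ := mem_D4Roots_iff_exists_ne.mp hv
  simp only [epsBasis, add_dotProduct, smul_dotProduct, single_dotProduct, Pi.add_apply,
    Pi.smul_apply, Pi.single_eq_same, Pi.single_eq_of_ne hab, Pi.single_eq_of_ne hab.symm,
    smul_eq_mul]
  rcases hs with rfl | rfl <;> rcases ht with rfl | rfl <;> norm_num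

theorem mem_D4Roots_of_dotProduct_self {v : Fin 4 → ℝ} (hv : ∀ i, v i ∈ ({-1, 0, 1} : Set ℝ))
    (hvv : v ⬝ᵥ v = 2) : v ∈ D4Roots := by
  have hsq : ∀ i, v i * v i = if v i ≠ 0 then 1 else 0 := fun i => by
    obtain h | h | h : v i = -1 ∨ v i = 0 ∨ v i = 1 := hv i <;> simp [h]
  have hcard : (Finset.univ.filter fun i => v i ≠ 0).card = 2 := by
    simp only [dotProduct, hsq, Finset.sum_boole] at hvv
    exact_mod_cast hvv
  obtain ⟨a, b, hab, hsupp⟩ := Finset.card_eq_two.mp hcard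
  have hmem : ∀ i, v i ≠ 0 ↔ i = a ∨ i = b := fun i => by
    simpa using congrArg (i ∈ ·) hsupp
  have hsign : ∀ i, v i ≠ 0 → v i = 1 ∨ v i = -1 := fun i hi => by
    obtain h | h | h : v i = -1 ∨ v i = 0 ∨ v i = 1 := hv i <;> simp_all
  refine mem_D4Roots_iff_exists_ne.mpr ⟨a, b, hab, v a, v b, hsign a ((hmem a).mpr (.inl rfl)),
    hsign b ((hmem b).mpr (.inr rfl)), funext fun i => ?_⟩
  by_cases hia : i = a
  · subst hia; simp [epsBasis, hab.symm]
  by_cases hib : i = b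
  · subst hib; simp [epsBasis, hia]
  have hvi : v i = 0 := by simpa [hia, hib] using (hmem i).not
  simp [epsBasis, hia, hib, hvi]

theorem mem_D4Roots_iff {v : Fin 4 → ℝ} :
    v ∈ D4Roots ↔ (∀ i, v i ∈ ({-1, 0, 1} : Set ℝ)) ∧ v ⬝ᵥ v = 2 :=
  ⟨fun hv => ⟨apply_mem_of_mem_D4Roots hv, dotProduct_self_of_mem_D4Roots hv⟩,
    fun hv => mem_D4Roots_of_dotProduct_self hv.1 hv.2⟩

theorem D4Roots_finite : D4Roots.Finite :=
  (Set.Finite.pi fun _ => Set.toFinite _).subset fun _ hv i _ => (mem_D4Roots_iff.mp hv).1 i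

theorem span_D4Roots_eq_top : Submodule.span ℝ D4Roots = ⊤ := by
  refine eq_top_iff.mpr <| (Pi.basisFun ℝ (Fin 4)).span_eq.symm.le.trans <|
    Submodule.span_le.mpr ?_
  rintro _ ⟨a, rfl⟩
  obtain ⟨b, hab⟩ := exists_ne a
  have hplus : epsBasis a + epsBasis b ∈ D4Roots :=
    mem_D4Roots_iff_exists_ne.mpr ⟨a, b, hab.symm, 1, 1, by simp⟩
  have hminus : epsBasis a - epsBasis b ∈ D4Roots :=
    mem_D4Roots_iff_exists_ne.mpr ⟨a, b, hab.symm, 1, -1, by simp [sub_eq_add_neg]⟩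
  have hsplit : Pi.basisFun ℝ (Fin 4) a =
      (2⁻¹ : ℝ) • ((epsBasis a + epsBasis b) + (epsBasis a - epsBasis b)) := by
    rw [Pi.basisFun_apply]; unfold epsBasis; module
  rw [hsplit]
  exact Submodule.smul_mem _ _
    (Submodule.add_mem _ (Submodule.subset_span hplus) (Submodule.subset_span hminus))

theorem mapsTo_mulVec_D4Roots {A : Matrix (Fin 4) (Fin 4) ℝ} (hA : Aᵀ * A = 1)
    (hAij : ∀ i j, A i j = 2⁻¹ ∨ A i j = -2⁻¹) : MapsTo (A *ᵥ ·) D4Roots D4Roots := by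
  intro v hv
  refine mem_D4Roots_iff.mpr ⟨fun i => ?_, ?_⟩
  · obtain ⟨a, b, -, s, t, hs, ht, rfl⟩ := mem_D4Roots_iff_exists_ne.mp hv
    simp only [epsBasis, mulVec_add, mulVec_smul, mulVec_single_one, Pi.add_apply,
      Pi.smul_apply, col_apply, smul_eq_mul]
    rcases hs with rfl | rfl <;> rcases ht with rfl | rfl <;> rcases hAij i a with h | h <;>
      rcases hAij i b with h' | h' <;> norm_num [h, h']
  · rw [dotProduct_mulVec_mulVec_of_transpose_mul_self hA]
    exact (mem_D4Roots_iff.mp hv).2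

theorem bijOn_mulVec_D4Roots {A : Matrix (Fin 4) (Fin 4) ℝ} (hA : Aᵀ * A = 1)
    (hAij : ∀ i j, A i j = 2⁻¹ ∨ A i j = -2⁻¹) : BijOn (A *ᵥ ·) D4Roots D4Roots := by
  refine (D4Roots_finite.injOn_iff_bijOn_of_mapsTo (mapsTo_mulVec_D4Roots hA hAij)).mp ?_
  intro x _ y _ hxy
  simpa [mulVec_mulVec, hA] using congrArg (Aᵀ *ᵥ ·) hxy

noncomputable def matS : Matrix (Fin 4) (Fin 4) ℝ :=
  (2⁻¹ : ℝ) • !![1, 1, -1, -1; 1, 1, 1, 1; 1, -1, 1, -1; 1, -1, -1, 1]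

noncomputable def matT : Matrix (Fin 4) (Fin 4) ℝ :=
  (2⁻¹ : ℝ) • !![1, -1, 1, 1; 1, 1, -1, 1; 1, 1, 1, -1; -1, 1, 1, 1]

theorem transpose_matS_mul_self : matSᵀ * matS = 1 := by
  ext i j; fin_cases i <;> fin_cases j <;> simp [matS, mul_apply, Fin.sum_univ_four] <;> norm_num

theorem transpose_matT_mul_self : matTᵀ * matT = 1 := by
  ext i j; fin_cases i <;> fin_cases j <;> simp [matT, mul_apply, Fin.sum_univ_four] <;> norm_num

theorem matS_apply_eq_or (i j : Fin 4) : matS i j = 2⁻¹ ∨ matS i j = -2⁻¹ := by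
  fin_cases i <;> fin_cases j <;> norm_num [matS]

theorem matT_apply_eq_or (i j : Fin 4) : matT i j = 2⁻¹ ∨ matT i j = -2⁻¹ := by
  fin_cases i <;> fin_cases j <;> norm_num [matT]

/-- The two explicit linear maps `M_S`, `M_T` of `ℝ⁴` are orthogonal, map the
`D₄` root system bijectively onto itself, and generate a finite subgroup of `GL(4, ℝ)`. -/
theorem stmt_11 (MS MT : (Fin 4 → ℝ) →ₗ[ℝ] (Fin 4 → ℝ))
    (hS1 : MS (epsBasis 0) = (1 / 2 : ℝ) • (epsBasis 0 + epsBasis 1 + epsBasis 2 + epsBasis 3))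
    (hS2 : MS (epsBasis 1) = (1 / 2 : ℝ) • (epsBasis 0 + epsBasis 1 - epsBasis 2 - epsBasis 3))
    (hS3 : MS (epsBasis 2) = (1 / 2 : ℝ) • (-epsBasis 0 + epsBasis 1 + epsBasis 2 - epsBasis 3))
    (hS4 : MS (epsBasis 3) = (1 / 2 : ℝ) • (-epsBasis 0 + epsBasis 1 - epsBasis 2 + epsBasis 3))
    (hT1 : MT (epsBasis 0) = (1 / 2 : ℝ) • (epsBasis 0 + epsBasis 1 + epsBasis 2 - epsBasis 3))
    (hT2 : MT (epsBasis 1) = (1 / 2 : ℝ) • (-epsBasis 0 + epsBasis 1 + epsBasis 2 + epsBasis 3))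
    (hT3 : MT (epsBasis 2) = (1 / 2 : ℝ) • (epsBasis 0 - epsBasis 1 + epsBasis 2 + epsBasis 3))
    (hT4 : MT (epsBasis 3) = (1 / 2 : ℝ) • (epsBasis 0 + epsBasis 1 - epsBasis 2 + epsBasis 3)) :
    (∀ x y : Fin 4 → ℝ, ∑ i, MS x i * MS y i = ∑ i, x i * y i) ∧
    (∀ x y : Fin 4 → ℝ, ∑ i, MT x i * MT y i = ∑ i, x i * y i) ∧
    Set.BijOn (fun v => MS v) D4Roots D4Roots ∧
    Set.BijOn (fun v => MT v) D4Roots D4Roots ∧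
    (∃ uS uT : (Module.End ℝ (Fin 4 → ℝ))ˣ,
      (uS : Module.End ℝ (Fin 4 → ℝ)) = MS ∧ (uT : Module.End ℝ (Fin 4 → ℝ)) = MT ∧
      Set.Finite ((Subgroup.closure {uS, uT} : Subgroup (Module.End ℝ (Fin 4 → ℝ))ˣ) :
        Set (Module.End ℝ (Fin 4 → ℝ))ˣ)) := by
  have hMS : MS = toLin' matS := (Pi.basisFun ℝ (Fin 4)).ext fun j => by
    rw [Pi.basisFun_apply]
    change MS (epsBasis j) = toLin' matS (epsBasis j)
    fin_cases j <;> simp only [Fin.reduceFinMk, hS1, hS2, hS3, hS4] <;> ext i <;> fin_cases i <;>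
      simp [matS, epsBasis]
  have hMT : MT = toLin' matT := (Pi.basisFun ℝ (Fin 4)).ext fun j => by
    rw [Pi.basisFun_apply]
    change MT (epsBasis j) = toLin' matT (epsBasis j)
    fin_cases j <;> simp only [Fin.reduceFinMk, hT1, hT2, hT3, hT4] <;> ext i <;> fin_cases i <;>
      simp [matT, epsBasis]
  subst hMS hMT
  obtain ⟨uS, huS⟩ := isUnit_toLin'_of_transpose_mul_self transpose_matS_mul_self
  obtain ⟨uT, huT⟩ := isUnit_toLin'_of_transpose_mul_self transpose_matT_mul_self
  refine ⟨dotProduct_mulVec_mulVec_of_transpose_mul_self transpose_matS_mul_self,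
    dotProduct_mulVec_mulVec_of_transpose_mul_self transpose_matT_mul_self,
    bijOn_mulVec_D4Roots transpose_matS_mul_self matS_apply_eq_or,
    bijOn_mulVec_D4Roots transpose_matT_mul_self matT_apply_eq_or, uS, uT, huS, huT, ?_⟩
  refine (Module.End.finite_stabilizer_of_span_eq_top D4Roots_finite
    span_D4Roots_eq_top).subset ?_
  rw [SetLike.coe_subset_coe, Subgroup.closure_le]
  rintro u (rfl | rfl) <;> refine (MulAction.mem_stabilizer_set' D4Roots_finite).mpr fun v hv => ?_
  · rw [Units.smul_def, huS]
    exact mapsTo_mulVec_D4Roots transpose_matS_mul_self matS_apply_eq_or hv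
  · rw [Units.smul_def, huT]
    exact mapsTo_mulVec_D4Roots transpose_matT_mul_self matT_apply_eq_or hv
end

section
/- Fix integers d ≥ 1 and 1 ≤ k ≤ d. Let G be the group of all bijections of E = {±1, …, ±d} commuting with negation ι(e) = −e, acting diagonally on R̂_k × R̂_k. Then two pairs (A, B) and (A′, B′) in R̂_k × R̂_k lie in the same G-orbit if and only if #(A ∩ B) = #(A′ ∩ B′) and #(p(A) ∩ p(B)) = #(p(A′) ∩ p(B′)). Moreover, the pairs (ℓ̃, ℓ) = (#(A ∩ B), #(p(A) ∩ p(B))) realized by elements of R̂_k × R̂_k are exactly those satisfying 0 ≤ ℓ̃ ≤ ℓ ≤ k and ℓ ≥ 2k − d. -/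
/-!
An element of `G` amounts to a permutation `σ` of the levels `{1, …, d}` together with a sign at
every level. The levels of a pair `(A, B)` form a chain
`p(A ∩ B) ⊆ p(A) ∩ p(B) ⊆ p(A) ⊆ p(A) ∪ p(B) ⊆ {1, …, d}` of cardinalities
`ℓ̃, ℓ, k, 2k - ℓ, d`, and the first member of the chain containing a level `n` determines, up to
exchanging `n` and `-n`, which of `±n` lie in `A` and in `B`. So if two pairs have the same
invariants, some `σ` carries one chain onto the other, and choosing the signs so that a fixed
representative of each level goes to that of its image gives the required element of `G`.
Monotonicity of the chain gives `ℓ̃ ≤ ℓ ≤ k` and `2k - ℓ ≤ d`, and pairs made of intervals attain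
every admissible `(ℓ̃, ℓ)`.
-/

/-- The set `E = {±1, …, ±d}` of nonzero integers of absolute value at most `d`. -/
noncomputable def Eset (d : ℕ) : Finset ℤ := (Finset.Icc (-(d : ℤ)) d).filter (· ≠ 0)

/-- `A` belongs to `R̂_k`: a `k`-element subset of `E` containing no pair `{i, −i}`. -/
def RhatP (d k : ℕ) (A : Finset ℤ) : Prop :=
  A ⊆ Eset d ∧ A.card = k ∧ ∀ a ∈ A, -a ∉ A

open Finset

section

variable {α : Type*}

theorem exists_bijOn_of_card_fiber_eq [DecidableEq α] {β : Type*} [DecidableEq β]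
    {s t : Finset α} {f g : α → β} (h : ∀ b, #{x ∈ s | f x = b} = #{x ∈ t | g x = b}) :
    ∃ σ : α → α, Set.BijOn σ s t ∧ ∀ x ∈ s, g (σ x) = f x := by
  have hfib : ∀ b, Fintype.card {x : s // f x = b} = Fintype.card {y : t // g y = b} := by
    intro b
    rw [Fintype.card_subtype, Fintype.card_subtype, univ_eq_attach, univ_eq_attach,
      filter_attach (f · = b), filter_attach (g · = b), card_map, card_map, card_attach,
      card_attach, h]
  let e : s ≃ t := Equiv.ofFiberEquiv fun b => Fintype.equivOfCardEq (hfib b)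
  refine ⟨fun x => if hx : x ∈ s then e ⟨x, hx⟩ else x,
    ⟨fun x hx => ?_, fun x hx y hy hxy => ?_, fun y hy => ?_⟩, fun x hx => ?_⟩
  · rw [mem_coe] at hx
    simp [hx]
  · rw [mem_coe] at hx hy
    simpa [hx, hy, Subtype.ext_iff] using hxy
  · rw [mem_coe] at hy
    exact ⟨_, (e.symm ⟨y, hy⟩).2, by simp⟩
  · simp only [dif_pos hx]
    exact Equiv.ofFiberEquiv_map (f := fun x : s => f x) (g := fun y : t => g y) _ ⟨x, hx⟩

lemma card_filter_eq_of_card_filter_le_eq [DecidableEq α] {s t : Finset α} {f g : α → ℕ}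
    (h : ∀ j, #{x ∈ s | f x ≤ j} = #{x ∈ t | g x ≤ j}) (i : ℕ) :
    #{x ∈ s | f x = i} = #{x ∈ t | g x = i} := by
  have hsplit : ∀ (u : Finset α) (r : α → ℕ) (j : ℕ),
      #{x ∈ u | r x = j + 1} + #{x ∈ u | r x ≤ j} = #{x ∈ u | r x ≤ j + 1} := by
    intro u r j
    rw [← card_union_of_disjoint (disjoint_filter.2 fun _ _ _ => by omega), ← filter_or]
    exact congrArg card (filter_congr fun _ _ => by omega)
  cases i with
  | zero => simpa only [Nat.le_zero] using h 0
  | succ i =>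
    have := hsplit s f i
    have := hsplit t g i
    have := h i
    have := h (i + 1)
    omega

open Classical in
noncomputable def chainRank (C : ℕ → Finset α) (x : α) : ℕ :=
  if h : ∃ i, x ∈ C i then Nat.find h else 0

lemma chainRank_le_iff {C : ℕ → Finset α} (hC : Monotone C) {x : α} (hx : ∃ i, x ∈ C i)
    {j : ℕ} : chainRank C x ≤ j ↔ x ∈ C j := by
  classical
  rw [chainRank, dif_pos hx, Nat.find_le_iff]
  exact ⟨fun ⟨i, hij, hxi⟩ => hC hij hxi, fun hxj => ⟨j, le_rfl, hxj⟩⟩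

theorem exists_bijOn_of_chain [DecidableEq α] {C C' : ℕ → Finset α} (hC : Monotone C)
    (hC' : Monotone C') (hcard : ∀ i, #(C i) = #(C' i)) (m : ℕ) :
    ∃ σ : α → α, Set.BijOn σ (C m) (C' m) ∧ ∀ x ∈ C m, ∀ i, σ x ∈ C' i ↔ x ∈ C i := by
  have filter_rank_le : ∀ {D : ℕ → Finset α}, Monotone D → ∀ j,
      {x ∈ D m | chainRank D x ≤ j} = D (min m j) := by
    intro D hD j
    ext x
    rw [mem_filter]
    refine ⟨fun ⟨hxm, hxj⟩ => ?_, fun hx => ⟨hD (min_le_left m j) hx, ?_⟩⟩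
    · rw [chainRank_le_iff hD ⟨m, hxm⟩] at hxj
      rcases le_total m j with h | h <;> simpa [h]
    · exact (chainRank_le_iff hD ⟨_, hx⟩).2 (hD (min_le_right m j) hx)
  obtain ⟨σ, hσ, hrank⟩ := exists_bijOn_of_card_fiber_eq (s := C m) (t := C' m)
    (card_filter_eq_of_card_filter_le_eq fun j => by
      rw [filter_rank_le hC, filter_rank_le hC', hcard])
  refine ⟨σ, hσ, fun x hx i => ?_⟩
  rw [← chainRank_le_iff hC' ⟨m, hσ.mapsTo hx⟩, hrank x hx, chainRank_le_iff hC ⟨m, hx⟩]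

lemma image_eq_of_forall_mem_iff [DecidableEq α] {g : Equiv.Perm α} {S X X' : Finset α}
    (hgS : ∀ e, e ∈ S ↔ g e ∈ S) (hX : X ⊆ S) (hX' : X' ⊆ S)
    (h : ∀ e ∈ S, e ∈ X ↔ g e ∈ X') : X.image g = X' := by
  ext y
  rw [mem_image]
  constructor
  · rintro ⟨x, hx, rfl⟩
    exact (h x (hX hx)).1 hx
  · intro hy
    have hyS : g.symm y ∈ S := by
      rw [hgS, Equiv.apply_symm_apply]
      exact hX' hy
    exact ⟨g.symm y, (h _ hyS).2 (by rwa [Equiv.apply_symm_apply]), Equiv.apply_symm_apply g y⟩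

end

namespace Hyperoctahedral

variable {d : ℕ}

lemma mem_Eset_iff {e : ℤ} : e ∈ Eset d ↔ |e| ∈ Icc (1 : ℤ) d := by
  simp only [Eset, mem_filter, mem_Icc, abs_eq_max_neg]
  omega

lemma neg_mem_Eset {e : ℤ} : -e ∈ Eset d ↔ e ∈ Eset d := by
  rw [mem_Eset_iff, mem_Eset_iff, abs_neg]

lemma ne_zero_of_mem_Eset {e : ℤ} (he : e ∈ Eset d) : e ≠ 0 := by
  rintro rfl
  simp [mem_Eset_iff] at he

lemma mem_Eset_of_mem_Icc {n : ℤ} (hn : n ∈ Icc (1 : ℤ) d) : n ∈ Eset d := by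
  rwa [mem_Eset_iff, abs_of_pos (by rw [mem_Icc] at hn; omega)]

lemma mem_image_abs {A : Finset ℤ} {n : ℤ} :
    n ∈ A.image (|·|) ↔ 0 ≤ n ∧ (n ∈ A ∨ -n ∈ A) := by
  rw [mem_image]
  constructor
  · rintro ⟨a, ha, rfl⟩
    refine ⟨abs_nonneg a, ?_⟩
    rcases abs_choice a with h | h <;> rw [h] <;> simp [ha]
  · rintro ⟨hn, ha | ha⟩
    exacts [⟨n, ha, abs_of_nonneg hn⟩, ⟨-n, ha, by rw [abs_neg, abs_of_nonneg hn]⟩]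

lemma image_abs_subset_Icc {A : Finset ℤ} (hA : A ⊆ Eset d) : A.image (|·|) ⊆ Icc 1 d := by
  intro n hn
  obtain ⟨a, ha, rfl⟩ := mem_image.1 hn
  exact mem_Eset_iff.1 (hA ha)

lemma injOn_abs {A : Finset ℤ} (hA : ∀ a ∈ A, -a ∉ A) : Set.InjOn (|·|) (A : Set ℤ) := by
  intro a ha b hb hab
  rcases abs_eq_abs.1 hab with h | rfl
  · exact h
  · exact absurd ha (hA b hb)

lemma card_image_abs {A : Finset ℤ} (hA : ∀ a ∈ A, -a ∉ A) : #(A.image (|·|)) = #A :=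
  card_image_of_injOn (injOn_abs hA)

theorem exists_signedPerm {σ : ℤ → ℤ} (hσ : Set.BijOn σ (Icc (1 : ℤ) d) (Icc (1 : ℤ) d))
    {u u' : ℤ → ℤ} (hu : ∀ n, |u n| = |n|) (hu' : ∀ n, |u' n| = |n|) :
    ∃ g : Equiv.Perm ℤ, (∀ e, e ∈ Eset d ↔ g e ∈ Eset d) ∧ (∀ e ∈ Eset d, g (-e) = -g e) ∧
      ∀ n ∈ Icc (1 : ℤ) d, g (u n) = u' (σ n) := by
  classical
  set f : ℤ → ℤ := fun e => if e = u |e| then u' (σ |e|) else -u' (σ |e|) with hf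
  have habs : ∀ e ∈ Eset d, |f e| = σ |e| := by
    intro e he
    have hσe := hσ.mapsTo (mem_coe.2 (mem_Eset_iff.1 he))
    rw [mem_coe, mem_Icc] at hσe
    simp only [hf]
    split_ifs <;> simp only [abs_neg, hu', abs_of_pos (show 0 < σ |e| by omega)]
  have hneg : ∀ e ≠ 0, f (-e) = -f e := by
    intro e he
    obtain ⟨v, hv⟩ : ∃ v, u |e| = v := ⟨_, rfl⟩
    have hve := hu |e|
    rw [hv, abs_abs] at hve
    simp only [abs_eq_max_neg] at hve
    simp only [hf, abs_neg, hv]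
    split_ifs <;> omega
  have hmaps : Set.MapsTo f (Eset d) (Eset d) := by
    intro e he
    rw [mem_coe, mem_Eset_iff, habs e he]
    exact hσ.mapsTo (mem_Eset_iff.1 he)
  have hinj : Set.InjOn f (Eset d) := by
    intro e he e' he' hee'
    have hlev : |e| = |e'| := hσ.injOn (mem_Eset_iff.1 he) (mem_Eset_iff.1 he')
      (by rw [← habs e he, ← habs e' he', hee'])
    rcases abs_eq_abs.1 hlev with h | rfl
    · exact h
    · have hf0 : f e' = 0 := by
        have := hneg e' (ne_zero_of_mem_Eset he')
        omega
      have hσpos := hσ.mapsTo (mem_Eset_iff.1 he')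
      rw [mem_coe, mem_Icc, ← habs e' he', hf0] at hσpos
      simp at hσpos
  have hbij := ((Eset d).finite_toSet.injOn_iff_bijOn_of_mapsTo hmaps).1 hinj
  have hg : ∀ e ∈ Eset d, Equiv.Perm.ofSubtype (hbij.equiv f) e = f e := fun e he => by
    rw [Equiv.Perm.ofSubtype_apply_of_mem _ (mem_coe.2 he)]
    rfl
  refine ⟨Equiv.Perm.ofSubtype (hbij.equiv f), fun e => ?_, fun e he => ?_, fun n hn => ?_⟩
  · simpa using (Equiv.Perm.ofSubtype_apply_mem_iff_mem (hbij.equiv f) e).symm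
  · rw [hg e he, hg _ (neg_mem_Eset.2 he), hneg e (ne_zero_of_mem_Eset he)]
  · have hn0 : 0 < n := by
      rw [mem_Icc] at hn
      omega
    have hun : u n ∈ Eset d := by
      rw [mem_Eset_iff, hu, abs_of_pos hn0]
      exact hn
    rw [hg _ hun]
    simp [hf, hu, abs_of_pos hn0]

/-- The representative of the level `n`: its element in `A` if there is one, otherwise its
element in `B` if there is one, otherwise `n`. -/
def orient (A B : Finset ℤ) (n : ℤ) : ℤ := if -n ∈ A ∨ (n ∉ A ∧ -n ∈ B) then -n else n

lemma abs_orient (A B : Finset ℤ) (n : ℤ) : |orient A B n| = |n| := by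
  unfold orient
  split_ifs <;> simp

lemma orient_abs_eq_or (A B : Finset ℤ) (e : ℤ) :
    orient A B |e| = e ∨ orient A B |e| = -e := by
  unfold orient
  split_ifs <;> rcases abs_choice e with h | h <;> rw [h] <;> simp

section Orient

variable {A B : Finset ℤ} {n : ℤ}

lemma orient_mem_left_iff (hn : 0 ≤ n) : orient A B n ∈ A ↔ n ∈ A.image (|·|) := by
  rw [mem_image_abs]
  unfold orient
  split_ifs <;> tauto

lemma neg_orient_not_mem_left (hA : ∀ a ∈ A, -a ∉ A) : -orient A B n ∉ A := by
  have := hA n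
  have := hA (-n)
  rw [orient, apply_ite Neg.neg, neg_neg]
  split_ifs <;> tauto

lemma orient_mem_right_iff (hA : ∀ a ∈ A, -a ∉ A) (hn : 0 ≤ n) :
    orient A B n ∈ B ↔
      n ∈ (A ∩ B).image (|·|) ∨ (n ∉ A.image (|·|) ∧ n ∈ B.image (|·|)) := by
  have := hA n
  have := hA (-n)
  simp only [mem_image_abs, mem_inter, neg_neg] at *
  unfold orient
  split_ifs <;> tauto

lemma neg_orient_mem_right_iff (hA : ∀ a ∈ A, -a ∉ A) (hB : ∀ b ∈ B, -b ∉ B) (hn : 0 ≤ n) :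
    -orient A B n ∈ B ↔
      n ∈ A.image (|·|) ∧ n ∈ B.image (|·|) ∧ n ∉ (A ∩ B).image (|·|) := by
  have := hA n
  have := hA (-n)
  have := hB n
  have := hB (-n)
  simp only [mem_image_abs, mem_inter, neg_neg] at *
  rw [orient, apply_ite Neg.neg, neg_neg]
  split_ifs <;> tauto

end Orient

lemma orient_mem_iff_of_mem_image_abs_iff {A B A' B' : Finset ℤ} (hA : ∀ a ∈ A, -a ∉ A)
    (hB : ∀ b ∈ B, -b ∉ B) (hA' : ∀ a ∈ A', -a ∉ A') (hB' : ∀ b ∈ B', -b ∉ B') {n m : ℤ}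
    (hn : 0 ≤ n) (hm : 0 ≤ m)
    (hAB : n ∈ (A ∩ B).image (|·|) ↔ m ∈ (A' ∩ B').image (|·|))
    (hpA : n ∈ A.image (|·|) ↔ m ∈ A'.image (|·|))
    (hpB : n ∈ B.image (|·|) ↔ m ∈ B'.image (|·|)) :
    (orient A B n ∈ A ↔ orient A' B' m ∈ A') ∧ (-orient A B n ∈ A ↔ -orient A' B' m ∈ A') ∧
      (orient A B n ∈ B ↔ orient A' B' m ∈ B') ∧
      (-orient A B n ∈ B ↔ -orient A' B' m ∈ B') := by
  rw [orient_mem_left_iff hn, orient_mem_left_iff hm, orient_mem_right_iff hA hn,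
    orient_mem_right_iff hA' hm, neg_orient_mem_right_iff hA hB hn,
    neg_orient_mem_right_iff hA' hB' hm, hAB, hpA, hpB]
  exact ⟨Iff.rfl, iff_of_false (neg_orient_not_mem_left hA) (neg_orient_not_mem_left hA'),
    Iff.rfl, Iff.rfl⟩

noncomputable def levelChain (d : ℕ) (A B : Finset ℤ) : ℕ → Finset ℤ
  | 0 => (A ∩ B).image (|·|)
  | 1 => A.image (|·|) ∩ B.image (|·|)
  | 2 => A.image (|·|)
  | 3 => A.image (|·|) ∪ B.image (|·|)
  | _ + 4 => Icc 1 d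

section LevelChain

variable {k : ℕ} {A B : Finset ℤ}

lemma levelChain_monotone (hA : A ⊆ Eset d) (hB : B ⊆ Eset d) : Monotone (levelChain d A B) := by
  refine monotone_nat_of_le_succ fun i => ?_
  match i with
  | 0 => exact image_inter_subset _ _ _
  | 1 => exact inter_subset_left
  | 2 => exact subset_union_left
  | 3 => exact union_subset (image_abs_subset_Icc hA) (image_abs_subset_Icc hB)
  | _ + 4 => exact subset_rfl

lemma card_levelChain_zero (hA : ∀ a ∈ A, -a ∉ A) : #(levelChain d A B 0) = #(A ∩ B) :=
  card_image_abs fun a ha h => hA a (mem_inter.1 ha).1 (mem_inter.1 h).1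

lemma card_levelChain_two (hA : RhatP d k A) : #(levelChain d A B 2) = k := by
  rw [levelChain, card_image_abs hA.2.2, hA.2.1]

lemma card_levelChain_three (hA : RhatP d k A) (hB : RhatP d k B) :
    #(levelChain d A B 3) + #(levelChain d A B 1) = 2 * k := by
  rw [levelChain, levelChain, card_union_add_card_inter, card_image_abs hA.2.2,
    card_image_abs hB.2.2, hA.2.1, hB.2.1, two_mul]

lemma card_levelChain_four : #(levelChain d A B 4) = d := by
  rw [levelChain, Int.card_Icc]
  omega

end LevelChain

lemma card_levelChain_eq {k : ℕ} {A B A' B' : Finset ℤ} (hA : RhatP d k A) (hB : RhatP d k B)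
    (hA' : RhatP d k A') (hB' : RhatP d k B') (h₁ : #(A ∩ B) = #(A' ∩ B'))
    (h₂ : #(A.image (|·|) ∩ B.image (|·|)) = #(A'.image (|·|) ∩ B'.image (|·|))) (i : ℕ) :
    #(levelChain d A B i) = #(levelChain d A' B' i) := by
  match i with
  | 0 => rw [card_levelChain_zero hA.2.2, card_levelChain_zero hA'.2.2, h₁]
  | 1 => exact h₂
  | 2 => rw [card_levelChain_two hA, card_levelChain_two hA']
  | 3 =>
    have := card_levelChain_three hA hB
    have := card_levelChain_three hA' hB'
    have : #(levelChain d A B 1) = #(levelChain d A' B' 1) := h₂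
    omega
  | _ + 4 => rfl

theorem exists_signedPerm_of_card_eq {k : ℕ} {A B A' B' : Finset ℤ} (hA : RhatP d k A)
    (hB : RhatP d k B) (hA' : RhatP d k A') (hB' : RhatP d k B') (h₁ : #(A ∩ B) = #(A' ∩ B'))
    (h₂ : #(A.image (|·|) ∩ B.image (|·|)) = #(A'.image (|·|) ∩ B'.image (|·|))) :
    ∃ g : Equiv.Perm ℤ, (∀ e, e ∈ Eset d ↔ g e ∈ Eset d) ∧ (∀ e ∈ Eset d, g (-e) = -g e) ∧
      A' = A.image g ∧ B' = B.image g := by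
  obtain ⟨σ, hσ, hσC⟩ := exists_bijOn_of_chain (levelChain_monotone hA.1 hB.1)
    (levelChain_monotone hA'.1 hB'.1) (card_levelChain_eq hA hB hA' hB' h₁ h₂) 4
  obtain ⟨g, hgE, hgneg, hg⟩ := exists_signedPerm hσ (abs_orient A B) (abs_orient A' B')
  have hmem : ∀ e ∈ Eset d, (e ∈ A ↔ g e ∈ A') ∧ (e ∈ B ↔ g e ∈ B') := by
    intro e he
    have hn : |e| ∈ Icc (1 : ℤ) d := mem_Eset_iff.1 he
    have hσn : 0 ≤ σ |e| := by
      have : σ |e| ∈ Icc (1 : ℤ) d := hσ.mapsTo hn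
      rw [mem_Icc] at this
      omega
    have hpB : |e| ∈ B.image (|·|) ↔ σ |e| ∈ B'.image (|·|) := by
      have hC₁ := hσC _ hn 1
      have hC₂ := hσC _ hn 2
      have hC₃ := hσC _ hn 3
      simp only [levelChain, mem_inter, mem_union] at hC₁ hC₂ hC₃
      tauto
    obtain ⟨hA₁, hA₂, hB₁, hB₂⟩ := orient_mem_iff_of_mem_image_abs_iff hA.2.2 hB.2.2 hA'.2.2
      hB'.2.2 (abs_nonneg e) hσn (hσC _ hn 0).symm (hσC _ hn 2).symm hpB
    rcases orient_abs_eq_or A B e with h | h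
    · rw [← h, hg _ hn]
      exact ⟨hA₁, hB₁⟩
    · rw [← neg_neg e, ← h, hgneg _ (by rw [h]; exact neg_mem_Eset.2 he), hg _ hn]
      exact ⟨hA₂, hB₂⟩
  exact ⟨g, hgE, hgneg,
    (image_eq_of_forall_mem_iff hgE hA.1 hA'.1 fun e he => (hmem e he).1).symm,
    (image_eq_of_forall_mem_iff hgE hB.1 hB'.1 fun e he => (hmem e he).2).symm⟩

theorem card_image_abs_inter_image_abs_image {g : Equiv.Perm ℤ}
    (hgneg : ∀ e ∈ Eset d, g (-e) = -g e) {A B : Finset ℤ} (hA : A ⊆ Eset d)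
    (hB : B ⊆ Eset d) :
    #((A.image g).image (|·|) ∩ (B.image g).image (|·|)) = #(A.image (|·|) ∩ B.image (|·|)) := by
  have hcomm : ∀ X ⊆ Eset d, (X.image g).image (|·|) = (X.image (|·|)).image (|g ·|) := by
    intro X hX
    rw [image_image, image_image]
    refine image_congr fun e he => ?_
    rcases abs_choice e with h | h <;>
      simp only [Function.comp_apply, h, hgneg e (hX he), abs_neg]
  have hinj : Set.InjOn (|g ·|) (Icc (1 : ℤ) d) := by
    intro n hn m hm hnm
    rcases abs_eq_abs.1 hnm with h | h
    · exact g.injective h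
    · rw [← hgneg m (mem_Eset_of_mem_Icc hm)] at h
      have := g.injective h
      rw [mem_coe, mem_Icc] at hn hm
      omega
  have hsub : ∀ X ⊆ Eset d, (X.image (|·|) : Set ℤ) ⊆ Icc (1 : ℤ) d := fun X hX =>
    coe_subset.2 (image_abs_subset_Icc hX)
  rw [hcomm A hA, hcomm B hB,
    ← image_inter_of_injOn _ _ (hinj.mono (Set.union_subset (hsub A hA) (hsub B hB))),
    card_image_of_injOn (hinj.mono (coe_subset.2 (inter_subset_left.trans
      (image_abs_subset_Icc hA))))]

theorem card_bounds_of_rhatP {k : ℕ} {A B : Finset ℤ} (hA : RhatP d k A) (hB : RhatP d k B) :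
    #(A ∩ B) ≤ #(A.image (|·|) ∩ B.image (|·|)) ∧ #(A.image (|·|) ∩ B.image (|·|)) ≤ k ∧
      2 * k ≤ #(A.image (|·|) ∩ B.image (|·|)) + d := by
  have hmono := levelChain_monotone hA.1 hB.1
  have h₀ := card_le_card (hmono (show 0 ≤ 1 by norm_num))
  have h₁ := card_le_card (hmono (show 1 ≤ 2 by norm_num))
  have h₃ := card_le_card (hmono (show 3 ≤ 4 by norm_num))
  have h₃₁ : #(levelChain d A B 3) + #(A.image (|·|) ∩ B.image (|·|)) = 2 * k :=
    card_levelChain_three hA hB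
  rw [card_levelChain_zero hA.2.2] at h₀
  rw [card_levelChain_two hA] at h₁
  rw [card_levelChain_four] at h₃
  exact ⟨h₀, h₁, by omega⟩

theorem exists_rhatP_pair {k l₁ l₂ : ℕ} (h₁₂ : l₁ ≤ l₂) (h₂ : l₂ ≤ k) (hd : 2 * k ≤ l₂ + d) :
    ∃ A B : Finset ℤ, RhatP d k A ∧ RhatP d k B ∧ #(A ∩ B) = l₁ ∧
      #(A.image (|·|) ∩ B.image (|·|)) = l₂ := by
  set a : ℤ := k - l₂
  set b : ℤ := k - l₁
  have hAB : Icc 1 (k : ℤ) ∩ (Icc (-b) (-(a + 1)) ∪ Icc (b + 1) (k + a)) = Icc (b + 1) k := by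
    ext x
    simp only [mem_inter, mem_union, mem_Icc]
    omega
  have hpApB : (Icc 1 (k : ℤ)).image (|·|) ∩
      (Icc (-b) (-(a + 1)) ∪ Icc (b + 1) (k + a)).image (|·|) = Icc (a + 1) k := by
    ext x
    simp only [mem_inter, mem_image_abs, mem_union, mem_Icc]
    omega
  have hdisj : Disjoint (Icc (-b) (-(a + 1))) (Icc (b + 1) (k + a)) :=
    disjoint_left.2 fun x h₁ h₂ => by rw [mem_Icc] at h₁ h₂; omega
  refine ⟨Icc 1 k, Icc (-b) (-(a + 1)) ∪ Icc (b + 1) (k + a), ⟨?_, ?_, ?_⟩, ⟨?_, ?_, ?_⟩, ?_, ?_⟩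
  · intro x hx
    rw [mem_Eset_iff, abs_eq_max_neg]
    simp only [mem_Icc] at hx ⊢
    omega
  · rw [Int.card_Icc]
    omega
  · intro x hx
    simp only [mem_Icc] at hx ⊢
    omega
  · intro x hx
    rw [mem_Eset_iff, abs_eq_max_neg]
    simp only [mem_union, mem_Icc] at hx ⊢
    omega
  · rw [card_union_of_disjoint hdisj, Int.card_Icc, Int.card_Icc]
    omega
  · intro x hx
    simp only [mem_union, mem_Icc] at hx ⊢
    omega
  · rw [hAB, Int.card_Icc]
    omega
  · rw [hpApB, Int.card_Icc]
    omega

end Hyperoctahedral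

theorem stmt_12_general (d k : ℕ) :
    (∀ A B A' B' : Finset ℤ, RhatP d k A → RhatP d k B → RhatP d k A' → RhatP d k B' →
      ((∃ g : Equiv.Perm ℤ,
          (∀ e : ℤ, e ∈ Eset d ↔ g e ∈ Eset d) ∧
          (∀ e ∈ Eset d, g (-e) = -(g e)) ∧
          A' = A.image g ∧ B' = B.image g) ↔
        ((A ∩ B).card = (A' ∩ B').card ∧
          (A.image (fun x => |x|) ∩ B.image (fun x => |x|)).card =
            (A'.image (fun x => |x|) ∩ B'.image (fun x => |x|)).card))) ∧
    (∀ l₁ l₂ : ℕ,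
      (∃ A B : Finset ℤ, RhatP d k A ∧ RhatP d k B ∧ (A ∩ B).card = l₁ ∧
          (A.image (fun x => |x|) ∩ B.image (fun x => |x|)).card = l₂) ↔
        (l₁ ≤ l₂ ∧ l₂ ≤ k ∧ 2 * k ≤ l₂ + d)) := by
  refine ⟨fun A B A' B' hA hB hA' hB' => ⟨?_, fun ⟨h₁, h₂⟩ => ?_⟩, fun l₁ l₂ => ⟨?_, ?_⟩⟩
  · rintro ⟨g, -, hgneg, rfl, rfl⟩
    rw [← image_inter_of_injOn _ _ g.injective.injOn, card_image_of_injective _ g.injective]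
    exact ⟨rfl, (Hyperoctahedral.card_image_abs_inter_image_abs_image hgneg hA.1 hB.1).symm⟩
  · exact Hyperoctahedral.exists_signedPerm_of_card_eq hA hB hA' hB' h₁ h₂
  · rintro ⟨A, B, hA, hB, rfl, rfl⟩
    exact Hyperoctahedral.card_bounds_of_rhatP hA hB
  · rintro ⟨h₁₂, h₂, hd⟩
    exact Hyperoctahedral.exists_rhatP_pair h₁₂ h₂ hd

/-- Two pairs `(A, B)`, `(A′, B′)` in `R̂_k × R̂_k` are in the same orbit of
the group of bijections of `E` commuting with negation (acting diagonally) iff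
`#(A ∩ B) = #(A′ ∩ B′)` and `#(p(A) ∩ p(B)) = #(p(A′) ∩ p(B′))`; and the realized pairs
`(ℓ̃, ℓ)` of such cardinalities are exactly those with `0 ≤ ℓ̃ ≤ ℓ ≤ k` and `ℓ ≥ 2k − d`. -/
theorem stmt_12 (d k : ℕ) (hd : 1 ≤ d) (hk : 1 ≤ k) (hkd : k ≤ d) :
    (∀ A B A' B' : Finset ℤ, RhatP d k A → RhatP d k B → RhatP d k A' → RhatP d k B' →
      ((∃ g : Equiv.Perm ℤ,
          (∀ e : ℤ, e ∈ Eset d ↔ g e ∈ Eset d) ∧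
          (∀ e ∈ Eset d, g (-e) = -(g e)) ∧
          A' = A.image g ∧ B' = B.image g) ↔
        ((A ∩ B).card = (A' ∩ B').card ∧
          (A.image (fun x => |x|) ∩ B.image (fun x => |x|)).card =
            (A'.image (fun x => |x|) ∩ B'.image (fun x => |x|)).card))) ∧
    (∀ l₁ l₂ : ℕ,
      (∃ A B : Finset ℤ, RhatP d k A ∧ RhatP d k B ∧ (A ∩ B).card = l₁ ∧
          (A.image (fun x => |x|) ∩ B.image (fun x => |x|)).card = l₂) ↔
        (l₁ ≤ l₂ ∧ l₂ ≤ k ∧ 2 * k ≤ l₂ + d)) :=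
  stmt_12_general d k
end

section
/- Fix integers d ≥ 1 and 1 ≤ k ≤ d. Let V be a real vector space of dimension 2d with basis (v_e)_{e ∈ E} indexed by E = {±1, …, ±d}, and let ω be a symplectic (nondegenerate alternating bilinear) form on V such that ω(v_i, v_{−i}) ≠ 0 for each i ∈ {1, …, d} and ω(v_e, v_f) = 0 whenever f ≠ −e. Let C : V → V be a linear map preserving ω, i.e., ω(Cx, Cy) = ω(x, y) for all x, y ∈ V. Then for every A ∈ R̂_k there exists B ∈ R̂_k such that the k×k matrix (c_{b,a})_{b ∈ B, a ∈ A} is invertible, where the coefficients c_{e,a} are defined by C(v_a) = Σ_{e ∈ E} c_{e,a} v_e. -/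
/-!
The coordinate vectors of `C v_a`, `a ∈ A`, span a `k`-dimensional subspace `U ⊆ ℝ^E` that is
isotropic for the pairing `∑ c_e x_e y_{-e}`, `c_e = ω(v_e, v_{-e})`, because `span {v_a}` is
isotropic and `C` preserves `ω`. Among the `k`-sets `B ⊆ E` whose coordinates determine the
vectors of `U` (i.e. the `k × k` minor on `B` is invertible), pick one with the fewest inverse
pairs. If `i, -i ∈ B`, let `u, w ∈ U` have `B`-coordinates the indicators of `i` and `-i`. In
`∑ c_e u_e w_{-e} = 0` the term at `e = i` is `c_i ≠ 0`, so some `e ≠ i` has `u_e w_{-e} ≠ 0`;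
then `e, -e ∉ B`, and exchanging `i` for `e` gives a determining set with fewer pairs.
-/

open Finset Submodule Module

section Coordinates

variable {K : Type*} [Field K] {ι : Type*}

def DeterminedBy (U : Submodule K (ι → K)) (s : Set ι) : Prop :=
  ∀ x ∈ U, (∀ i ∈ s, x i = 0) → x = 0

variable {U : Submodule K (ι → K)}

theorem DeterminedBy.mono {s t : Set ι} (h : DeterminedBy U s) (hst : s ⊆ t) :
    DeterminedBy U t :=
  fun x hx hxt => h x hx fun i hi => hxt i (hst hi)

theorem DeterminedBy.linearIndependent_comp {α κ : Type*} {M : α → ι → K}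
    (hM : LinearIndependent K M) {g : κ → ι}
    (h : DeterminedBy (span K (Set.range M)) (Set.range g)) :
    LinearIndependent K fun a => M a ∘ g :=
  hM.map (f := LinearMap.funLeft K K g) <| disjoint_def.mpr fun x hx hker =>
    h x hx <| by
      rintro _ ⟨j, rfl⟩
      exact congr_fun (LinearMap.mem_ker.mp hker) j

section

variable [DecidableEq ι]

theorem DeterminedBy.insert_erase {B : Finset ι} (h : DeterminedBy U B) {u : ι → K} (hu : u ∈ U)
    {i e : ι} (hui : u i = 1) (hub : ∀ b ∈ B, b ≠ i → u b = 0) (hue : u e ≠ 0) :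
    DeterminedBy U ↑(insert e (B.erase i)) := by
  intro x hx hxB
  have hxu : x = x i • u := by
    refine sub_eq_zero.mp <| h _ (sub_mem hx (smul_mem _ _ hu)) fun b hb => ?_
    by_cases hbi : b = i
    · simp [hbi, hui]
    · simp [hxB b (by simp [hbi, hb]), hub b hb hbi]
  have hxi : x i = 0 := by
    have hxe : x e = 0 := hxB e (by simp)
    rw [hxu, Pi.smul_apply, smul_eq_mul] at hxe
    exact (mul_eq_zero.mp hxe).resolve_right hue
  rw [hxu, hxi, zero_smul]

def pairedElements (neg : ι → ι) (B : Finset ι) : Finset ι := B.filter (neg · ∈ B)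

theorem card_pairedElements_insert_erase_lt {neg : ι → ι} (hneg : Function.Involutive neg)
    (hfix : ∀ e, neg e ≠ e) {B : Finset ι} {i e : ι} (hi : i ∈ B) (hni : neg i ∈ B)
    (he : e ∉ B) (hne : neg e ∉ B) :
    (pairedElements neg (insert e (B.erase i))).card < (pairedElements neg B).card := by
  refine card_lt_card ((ssubset_iff_of_subset ?_).mpr ⟨i, ?_⟩)
  · intro x
    have hx : neg (neg x) = x := hneg x
    simp only [pairedElements, mem_filter, mem_insert, mem_erase]
    grind
  · simp [pairedElements, hi, hni, ne_of_mem_of_not_mem hi he]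

end

variable [Fintype ι]

theorem span_range_coordinate_eq_top (U : Submodule K (ι → K)) :
    span K (Set.range fun i => LinearMap.proj i ∘ₗ U.subtype) = ⊤ := by
  set W := span K (Set.range fun i => LinearMap.proj i ∘ₗ U.subtype)
  have hW : W.dualCoannihilator = ⊥ := by
    refine (Submodule.eq_bot_iff _).mpr fun x hx => Subtype.ext (funext fun i => ?_)
    exact (mem_dualCoannihilator x).mp hx _ (subset_span ⟨i, rfl⟩)
  rw [← Subspace.dualCoannihilator_dualAnnihilator_eq (W := W), hW, dualAnnihilator_bot]

theorem exists_determinedBy_card_eq_finrank (U : Submodule K (ι → K)) :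
    ∃ B : Finset ι, B.card = finrank K U ∧ DeterminedBy U B := by
  classical
  set f : ι → Dual K U := fun i => LinearMap.proj i ∘ₗ U.subtype
  -- `b` indexes a basis of `Dual K U` made of coordinate functionals
  obtain ⟨b, -, -, hspan, hind⟩ :=
    exists_linearIndepOn_extension (v := f) (linearIndepOn_empty K f) (Set.empty_subset Set.univ)
  have htop : span K (f '' b) = ⊤ := by
    rw [Set.image_univ] at hspan
    exact eq_top_iff.mpr ((span_range_coordinate_eq_top U).symm.le.trans (span_le.mpr hspan))
  refine ⟨b.toFinset, ?_, fun x hx hxb => ?_⟩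
  · rw [← Subspace.dual_finrank_eq, ← finrank_top, ← htop, Set.toFinset_card, Set.image_eq_range,
      finrank_span_eq_card hind]
  · have hker : span K (f '' b) ≤ LinearMap.ker (Dual.eval K U ⟨x, hx⟩) :=
      span_le.mpr <| by
        rintro _ ⟨i, hi, rfl⟩
        exact hxb i (Set.mem_toFinset.mpr hi)
    rw [htop] at hker
    simpa using (forall_dual_apply_eq_zero_iff K (⟨x, hx⟩ : U)).mp fun φ => hker trivial

def IsIsotropic (neg : ι → ι) (c : ι → K) (U : Submodule K (ι → K)) : Prop :=
  ∀ x ∈ U, ∀ y ∈ U, ∑ e, c e * x e * y (neg e) = 0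

variable [DecidableEq ι]

theorem DeterminedBy.exists_eq_single {B : Finset ι} (h : DeterminedBy U B)
    (hB : B.card = finrank K U) {i : ι} (hi : i ∈ B) :
    ∃ u ∈ U, u i = 1 ∧ ∀ b ∈ B, b ≠ i → u b = 0 := by
  set R : U →ₗ[K] (B → K) := LinearMap.funLeft K K ((↑) : B → ι) ∘ₗ U.subtype
  have hinj : Function.Injective R := by
    refine (injective_iff_map_eq_zero R).mpr fun x hx => Subtype.ext <| h x x.2 fun b hb => ?_
    exact congr_fun hx ⟨b, hb⟩
  have hfin : finrank K U = finrank K (B → K) := by simp [hB]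
  obtain ⟨u, hu⟩ := (LinearMap.injective_iff_surjective_of_finrank_eq_finrank hfin).mp hinj
    (Pi.single ⟨i, hi⟩ 1)
  refine ⟨u, u.2, by simpa [R] using congr_fun hu ⟨i, hi⟩, fun b hb hbi => ?_⟩
  simpa [R, hbi] using congr_fun hu ⟨b, hb⟩

variable {neg : ι → ι} {c : ι → K}

theorem IsIsotropic.exists_exchange (hU : IsIsotropic neg c U) (hc : ∀ e, c e ≠ 0)
    (hneg : Function.Involutive neg) {B : Finset ι} (h : DeterminedBy U B)
    (hB : B.card = finrank K U) {i : ι} (hi : i ∈ B) (hni : neg i ∈ B) :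
    ∃ e ∉ B, neg e ∉ B ∧ DeterminedBy U ↑(insert e (B.erase i)) := by
  obtain ⟨u, hu, hui, hub⟩ := h.exists_eq_single hB hi
  obtain ⟨w, hw, hwi, hwb⟩ := h.exists_eq_single hB hni
  obtain ⟨e, hei, hterm⟩ : ∃ e, e ≠ i ∧ c e * u e * w (neg e) ≠ 0 := by
    by_contra! hcon
    have hsum := Finset.sum_eq_single_of_mem (f := fun e => c e * u e * w (neg e)) i (mem_univ i)
      fun e _ => hcon e
    simp only [hU u hu w hw, hui, hwi, mul_one] at hsum
    exact hc i hsum.symm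
  have hue : u e ≠ 0 := right_ne_zero_of_mul (left_ne_zero_of_mul hterm)
  have hwe : w (neg e) ≠ 0 := right_ne_zero_of_mul hterm
  exact ⟨e, fun he => hue (hub e he hei), fun he => hwe (hwb _ he (hneg.injective.ne hei)),
    h.insert_erase hu hui hub hue⟩

theorem IsIsotropic.exists_pairFree (hU : IsIsotropic neg c U) (hc : ∀ e, c e ≠ 0)
    (hneg : Function.Involutive neg) (hfix : ∀ e, neg e ≠ e) :
    ∃ B : Finset ι, B.card = finrank K U ∧ (∀ b ∈ B, neg b ∉ B) ∧ DeterminedBy U B := by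
  classical
  obtain ⟨B₀, hB₀, hdet₀⟩ := exists_determinedBy_card_eq_finrank U
  set S := (univ.powersetCard (finrank K U)).filter fun B : Finset ι => DeterminedBy U B
  obtain ⟨B, hBS, hmin⟩ := S.exists_min_image (fun B => (pairedElements neg B).card)
    ⟨B₀, by simp [S, hB₀, hdet₀]⟩
  simp only [S, mem_filter, mem_powersetCard] at hBS
  obtain ⟨⟨-, hB⟩, hdet⟩ := hBS
  refine ⟨B, hB, fun b hb hnb => ?_, hdet⟩
  obtain ⟨e, he, hne, hdet'⟩ := hU.exists_exchange hc hneg hdet hB hb hnb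
  have hcard : (insert e (B.erase b)).card = finrank K U := by
    rw [card_insert_of_notMem (fun h => he (mem_of_mem_erase h)), card_erase_of_mem hb, ← hB]
    exact Nat.sub_add_cancel (card_pos.mpr ⟨b, hb⟩)
  exact (hmin _ (mem_filter.mpr ⟨mem_powersetCard.mpr ⟨subset_univ _, hcard⟩, hdet'⟩)).not_gt
    (card_pairedElements_insert_erase_lt hneg hfix hb hnb he hne)

end Coordinates

section Bilinear

variable {K : Type*} [Field K] {ι : Type*} [Fintype ι] {V : Type*} [AddCommGroup V] [Module K V]
  (v : Basis ι K V) (ω : V →ₗ[K] V →ₗ[K] K)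

theorem apply_eq_sum_repr_mul_repr (neg : ι → ι) (hzero : ∀ e f, f ≠ neg e → ω (v e) (v f) = 0)
    (x y : V) : ω x y = ∑ e, ω (v e) (v (neg e)) * v.repr x e * v.repr y (neg e) := by
  conv_lhs => rw [← v.sum_repr x]
  simp only [map_sum, LinearMap.sum_apply, map_smul, LinearMap.smul_apply, smul_eq_mul]
  refine sum_congr rfl fun e _ => ?_
  conv_lhs => rw [← v.sum_repr y]
  simp only [map_sum, map_smul, smul_eq_mul]
  rw [sum_eq_single (neg e) (fun f _ hf => by rw [hzero e f hf, mul_zero])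
    (fun h => (h (mem_univ _)).elim)]
  ring

theorem apply_eq_zero_of_mem_span {s : Set V} (hs : ∀ x ∈ s, ∀ y ∈ s, ω x y = 0) {x y : V}
    (hx : x ∈ span K s) (hy : y ∈ span K s) : ω x y = 0 :=
  LinearMap.eqOn_span (f := ω.flip y) (g := 0)
    (fun x' hx' => LinearMap.eqOn_span (f := ω x') (g := 0) (hs x' hx') hy) hx

theorem injective_of_isometry_of_nondegenerate (hnondeg : ∀ x, (∀ y, ω x y = 0) → x = 0)
    {C : V →ₗ[K] V} (hC : ∀ x y, ω (C x) (C y) = ω x y) : Function.Injective C :=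
  (injective_iff_map_eq_zero C).mpr fun x hx =>
    hnondeg x fun y => by rw [← hC, hx, map_zero, LinearMap.zero_apply]

theorem isIsotropic_span_repr (neg : ι → ι) (hzero : ∀ e f, f ≠ neg e → ω (v e) (v f) = 0)
    {C : V →ₗ[K] V} (hC : ∀ x y, ω (C x) (C y) = ω x y) {α : Type*} {w : α → V}
    (hw : ∀ a b, ω (w a) (w b) = 0) :
    IsIsotropic neg (fun e => ω (v e) (v (neg e)))
      (span K (Set.range fun a => ⇑(v.repr (C (w a))))) := by
  have hrange : (Set.range fun a => ⇑(v.repr (C (w a)))) =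
      (v.equivFun.toLinearMap ∘ₗ C) '' Set.range w := by
    rw [← Set.range_comp]; rfl
  rw [hrange, span_image]
  rintro _ ⟨x, hx, rfl⟩ _ ⟨y, hy, rfl⟩
  have hxy := apply_eq_zero_of_mem_span ω (s := Set.range w)
    (by rintro _ ⟨a, rfl⟩ _ ⟨b, rfl⟩; exact hw a b) hx hy
  rw [← hC, apply_eq_sum_repr_mul_repr v ω neg hzero] at hxy
  simpa using hxy

end Bilinear

theorem neg_mem_Eset {d : ℕ} {e : ℤ} (he : e ∈ Eset d) : -e ∈ Eset d := by
  simp only [Eset, mem_filter, mem_Icc] at he ⊢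
  omega

def esetNeg (d : ℕ) (e : {e : ℤ // e ∈ Eset d}) : {e : ℤ // e ∈ Eset d} := ⟨-e, neg_mem_Eset e.2⟩

theorem esetNeg_involutive (d : ℕ) : Function.Involutive (esetNeg d) :=
  fun e => Subtype.ext (neg_neg (e : ℤ))

theorem esetNeg_ne_self (d : ℕ) (e : {e : ℤ // e ∈ Eset d}) : esetNeg d e ≠ e := by
  have he := e.2
  simp only [Eset, mem_filter] at he
  intro h
  have h' : -(e : ℤ) = e := congr_arg Subtype.val h
  exact he.2 (by omega)

theorem rhatP_map_subtype {d k : ℕ} {B : Finset {e : ℤ // e ∈ Eset d}} (hcard : B.card = k)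
    (hfree : ∀ b ∈ B, esetNeg d b ∉ B) : RhatP d k (B.map (Function.Embedding.subtype _)) := by
  refine ⟨fun e he => ?_, by rw [card_map, hcard], fun e he hne => ?_⟩
  · obtain ⟨b, -, rfl⟩ := mem_map.mp he
    exact b.2
  · obtain ⟨b, hb, rfl⟩ := mem_map.mp he
    obtain ⟨b', hb', hbb'⟩ := mem_map.mp hne
    exact hfree b hb ((Subtype.ext hbb' : b' = esetNeg d b) ▸ hb')

theorem stmt_13_general (d k : ℕ)
    (V : Type*) [AddCommGroup V] [Module ℝ V]
    (v : Module.Basis {e : ℤ // e ∈ Eset d} ℝ V)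
    (ω : V →ₗ[ℝ] V →ₗ[ℝ] ℝ)
    (hnondeg : ∀ x : V, (∀ y : V, ω x y = 0) → x = 0)
    (hzero : ∀ e f : {e : ℤ // e ∈ Eset d}, (f : ℤ) ≠ -(e : ℤ) → ω (v e) (v f) = 0)
    (hpair : ∀ e f : {e : ℤ // e ∈ Eset d}, (f : ℤ) = -(e : ℤ) → ω (v e) (v f) ≠ 0)
    (C : V →ₗ[ℝ] V)
    (hC : ∀ x y : V, ω (C x) (C y) = ω x y)
    (A : Finset ℤ) (hA : RhatP d k A) :
    ∃ B : Finset ℤ, ∃ hB : RhatP d k B,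
      LinearIndependent ℝ (fun a : {x // x ∈ A} => fun b : {x // x ∈ B} =>
        v.repr (C (v ⟨(a : ℤ), hA.1 a.2⟩)) ⟨(b : ℤ), hB.1 b.2⟩) := by
  set w : {x // x ∈ A} → V := fun a => v ⟨a, hA.1 a.2⟩
  set M := fun a => ⇑(v.repr (C (w a)))
  have hw : LinearIndependent ℝ w :=
    v.linearIndependent.comp _ fun _ _ h => Subtype.ext (Subtype.mk.inj h)
  have hCinj := injective_of_isometry_of_nondegenerate ω hnondeg hC
  have hM : LinearIndependent ℝ M :=
    (hw.map' C (LinearMap.ker_eq_bot.mpr hCinj)).map' v.equivFun.toLinearMap v.equivFun.ker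
  have hU : IsIsotropic (esetNeg d) _ (span ℝ (Set.range M)) :=
    isIsotropic_span_repr v ω (esetNeg d) (fun e f hf => hzero e f fun h => hf (Subtype.ext h)) hC
      fun a b => hzero _ _ fun h => hA.2.2 a a.2 (h ▸ b.2)
  obtain ⟨B, hBcard, hBfree, hBdet⟩ :=
    hU.exists_pairFree (fun e => hpair e _ rfl) (esetNeg_involutive d) (esetNeg_ne_self d)
  rw [finrank_span_eq_card hM, Fintype.card_coe, hA.2.1] at hBcard
  have hB := rhatP_map_subtype hBcard hBfree
  refine ⟨_, hB, (hBdet.mono ?_).linearIndependent_comp hM⟩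
  exact fun e he => ⟨⟨e, mem_map_of_mem _ he⟩, rfl⟩

/-- If `ω` is a symplectic form with `ω(v_i, v_{−i}) ≠ 0` and
`ω(v_e, v_f) = 0` for `f ≠ −e`, and `C` preserves `ω`, then for every `A ∈ R̂_k` there is
`B ∈ R̂_k` such that the `k×k` matrix `(c_{b,a})` of coefficients of `C` is invertible
(equivalently, its columns are linearly independent). -/
theorem stmt_13 (d k : ℕ) (hd : 1 ≤ d) (hk : 1 ≤ k) (hkd : k ≤ d)
    (V : Type*) [AddCommGroup V] [Module ℝ V]
    (v : Module.Basis {e : ℤ // e ∈ Eset d} ℝ V)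
    (ω : V →ₗ[ℝ] V →ₗ[ℝ] ℝ)
    (halt : ∀ x : V, ω x x = 0)
    (hnondeg : ∀ x : V, (∀ y : V, ω x y = 0) → x = 0)
    (hzero : ∀ e f : {e : ℤ // e ∈ Eset d}, (f : ℤ) ≠ -(e : ℤ) → ω (v e) (v f) = 0)
    (hpair : ∀ e f : {e : ℤ // e ∈ Eset d}, (f : ℤ) = -(e : ℤ) → ω (v e) (v f) ≠ 0)
    (C : V →ₗ[ℝ] V)
    (hC : ∀ x y : V, ω (C x) (C y) = ω x y)
    (A : Finset ℤ) (hA : RhatP d k A) :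
    ∃ B : Finset ℤ, ∃ hB : RhatP d k B,
      LinearIndependent ℝ (fun a : {x // x ∈ A} => fun b : {x // x ∈ B} =>
        v.repr (C (v ⟨(a : ℤ), hA.1 a.2⟩)) ⟨(b : ℤ), hB.1 b.2⟩) :=
  stmt_13_general d k V v ω hnondeg hzero hpair C hC A hA
end

section
/- Let ω be the standard symplectic form on ℝ⁴. For a 2-dimensional subspace H ⊆ ℝ⁴ on which ω is nondegenerate (a symplectic plane), and for any basis (e, f) of H with ω(e, f) = 1, the bivector i(H) := e ∧ f ∈ Λ²ℝ⁴ does not depend on the choice of such a basis; set v(H) := i(H) − i(H^⊥) ∈ Λ²ℝ⁴, where H^⊥ is the symplectic orthogonal of H. Then for symplectic planes H and H′ in ℝ⁴, the bivector v(H′) is a real scalar multiple of v(H) if and only if H′ = H or H′ = H^⊥. -/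
/-!
A change of basis inside a plane multiplies both `e ∧ f` and `ω(e, f)` by the same determinant,
which gives the independence of `i(H)`.

For the rigidity, contract a bivector `v` with the covector `ω(x, ·)`: this turns `v` into an
endomorphism `x ↦ ι_{ω(x,·)} v` of `ℝ⁴`, linear in `v`, and for `v = v(H) = e ∧ f - g ∧ h` it is
the reflection which is `-1` on `H` and `+1` on `H^⊥`. If `v(H') = c • v(H)`, then every
`x ∈ H'` satisfies `c • (reflection) x = -x`, which in `ℝ⁴ = H ⊕ H^⊥` forces `c = 1, x ∈ H`
or `c = -1, x ∈ H^⊥`, the same alternative for all of `H'`; equality follows by dimension.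
Conversely `v(H) = -v(H^⊥)` because `H^⊥⊥ = H`.
-/

/-- The standard symplectic form on `ℝ⁴`. -/
def omega4 (x y : Fin 4 → ℝ) : ℝ := x 0 * y 2 - x 2 * y 0 + x 1 * y 3 - x 3 * y 1

/-- A symplectic plane: a 2-dimensional subspace of `ℝ⁴` on which `omega4` is nondegenerate. -/
def IsSympPlane (H : Submodule ℝ (Fin 4 → ℝ)) : Prop :=
  Module.finrank ℝ H = 2 ∧ ∀ x ∈ H, (∀ y ∈ H, omega4 x y = 0) → x = 0

/-- The wedge product `e ∧ f` as an element of the exterior algebra of `ℝ⁴`. -/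
noncomputable def wedge (e f : Fin 4 → ℝ) : ExteriorAlgebra ℝ (Fin 4 → ℝ) :=
  ExteriorAlgebra.ι ℝ e * ExteriorAlgebra.ι ℝ f

open ExteriorAlgebra Submodule LinearMap.BilinForm

section Bivectors

variable {R M : Type*} [CommRing R] [AddCommGroup M] [Module R M]

lemma ι_smul_add_mul_ι_smul_add (e f : M) (a b c d : R) :
    ι R (a • e + b • f) * ι R (c • e + d • f) = (a * d - b * c) • (ι R e * ι R f) := by
  have hfe : ι R f * ι R e = -(ι R e * ι R f) := eq_neg_of_add_eq_zero_right (ι_add_mul_swap e f)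
  simp only [map_add, map_smul, add_mul, mul_add, smul_mul_assoc, mul_smul_comm, ι_sq_zero, hfe,
    smul_zero, smul_neg]
  module

noncomputable def contractEnd (B : LinearMap.BilinForm R M) :
    ExteriorAlgebra R M →ₗ[R] M →ₗ[R] M :=
  ((CliffordAlgebra.contractLeft ∘ₗ B).compr₂ ιInv).flip

lemma contractEnd_ι_mul_ι (B : LinearMap.BilinForm R M) (a b x : M) :
    contractEnd B (ι R a * ι R b) x = B x a • b - B x b • a := by
  simp [contractEnd, CliffordAlgebra.contractLeft_ι_mul, CliffordAlgebra.contractLeft_ι,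
    ← Algebra.commutes, ← Algebra.smul_def, ι_leftInverse _]

variable {B : LinearMap.BilinForm R M} (hB : B.IsAlt)
include hB

lemma mem_orthogonal_iff_of_isAlt {N : Submodule R M} {x : M} :
    x ∈ B.orthogonal N ↔ ∀ y ∈ N, B x y = 0 := by
  simp only [mem_orthogonal_iff, ← hB.neg_eq x, neg_eq_zero]

lemma mem_orthogonal_span_pair_iff {e f x : M} :
    x ∈ B.orthogonal (span R {e, f}) ↔ B x e = 0 ∧ B x f = 0 := by
  simp only [mem_orthogonal_iff_of_isAlt hB, mem_span_pair]
  constructor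
  · intro hx
    exact ⟨by simpa using hx e ⟨1, 0, by simp⟩, by simpa using hx f ⟨0, 1, by simp⟩⟩
  · rintro ⟨he, hf⟩ _ ⟨a, b, rfl⟩
    simp [he, hf]

lemma apply_smul_add_smul_add (e f : M) (a b c d : R) :
    B (a • e + b • f) (c • e + d • f) = (a * d - b * c) * B e f := by
  simp only [map_add, map_smul, LinearMap.add_apply, LinearMap.smul_apply, smul_eq_mul,
    hB.self_eq_zero, ← hB.neg_eq e f]
  ring

lemma ι_mul_ι_eq_of_mem_span {e f e' f' : M} (hef : B e f = 1) (he'f' : B e' f' = 1)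
    (he' : e' ∈ span R {e, f}) (hf' : f' ∈ span R {e, f}) :
    ι R e' * ι R f' = ι R e * ι R f := by
  obtain ⟨a, b, rfl⟩ := mem_span_pair.1 he'
  obtain ⟨c, d, rfl⟩ := mem_span_pair.1 hf'
  rw [apply_smul_add_smul_add hB, hef, mul_one] at he'f'
  rw [ι_smul_add_mul_ι_smul_add, he'f', one_smul]

lemma contractEnd_ι_mul_ι_of_mem_span {e f x : M} (hef : B e f = 1) (hx : x ∈ span R {e, f}) :
    contractEnd B (ι R e * ι R f) x = -x := by
  obtain ⟨a, b, rfl⟩ := mem_span_pair.1 hx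
  simp only [contractEnd_ι_mul_ι, map_add, map_smul, hB.self_eq_zero, ← hB.neg_eq e f, hef]
  module

lemma eq_zero_of_mem_span_of_mem_orthogonal {e f x : M} (hef : B e f = 1)
    (hx : x ∈ span R {e, f}) (hx' : x ∈ B.orthogonal (span R {e, f})) : x = 0 := by
  obtain ⟨he, hf⟩ := (mem_orthogonal_span_pair_iff hB).1 hx'
  simpa [contractEnd_ι_mul_ι, he, hf] using (contractEnd_ι_mul_ι_of_mem_span hB hef hx).symm

lemma isCompl_span_pair_orthogonal {e f : M} (hef : B e f = 1) :
    IsCompl (span R {e, f}) (B.orthogonal (span R {e, f})) := by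
  refine ⟨disjoint_def.2 fun x => eq_zero_of_mem_span_of_mem_orthogonal hB hef, ?_⟩
  refine codisjoint_iff.2 (eq_top_iff.2 fun x _ => mem_sup.2 ?_)
  refine ⟨B x f • e - B x e • f, mem_span_pair.2 ⟨B x f, -B x e, by module⟩,
    x - (B x f • e - B x e • f), (mem_orthogonal_span_pair_iff hB).2 ?_, by abel⟩
  simp only [map_sub, map_smul, LinearMap.sub_apply, LinearMap.smul_apply, smul_eq_mul,
    hB.self_eq_zero, ← hB.neg_eq e f, hef]
  constructor <;> ring

end Bivectors

section SymplecticPairs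

variable {R M : Type*} [CommRing R] [AddCommGroup M] [Module R M]
  {B : LinearMap.BilinForm R M} (hB : B.IsAlt) {e f g h : M}
  (hef : B e f = 1) (hgh : B g h = 1) (horth : span R {g, h} = B.orthogonal (span R {e, f}))
include hB

include hef hgh horth in
lemma span_pair_eq_orthogonal_span_pair :
    span R {e, f} = B.orthogonal (span R {g, h}) := by
  have hle : span R {e, f} ≤ B.orthogonal (span R {g, h}) :=
    horth ▸ le_orthogonal_orthogonal hB.isRefl
  calc span R {e, f}
      = span R {e, f} ⊔ span R {g, h} ⊓ B.orthogonal (span R {g, h}) := by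
        rw [(isCompl_span_pair_orthogonal hB hgh).inf_eq_bot, sup_bot_eq]
    _ = (span R {e, f} ⊔ span R {g, h}) ⊓ B.orthogonal (span R {g, h}) :=
        (sup_inf_assoc_of_le _ hle).symm
    _ = B.orthogonal (span R {g, h}) := by
        rw [horth, (isCompl_span_pair_orthogonal hB hef).sup_eq_top, top_inf_eq]

include hef in
lemma contractEnd_sub_apply_of_mem_span (hg : g ∈ B.orthogonal (span R {e, f}))
    (hh : h ∈ B.orthogonal (span R {e, f})) {x : M} (hx : x ∈ span R {e, f}) :
    contractEnd B (ι R e * ι R f - ι R g * ι R h) x = -x := by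
  rw [mem_orthogonal_iff] at hg hh
  rw [map_sub, LinearMap.sub_apply, contractEnd_ι_mul_ι_of_mem_span hB hef hx,
    contractEnd_ι_mul_ι, hg x hx, hh x hx, zero_smul, zero_smul, sub_zero, sub_zero]

include hgh horth in
lemma contractEnd_sub_apply_of_mem_orthogonal {x : M} (hx : x ∈ B.orthogonal (span R {e, f})) :
    contractEnd B (ι R e * ι R f - ι R g * ι R h) x = x := by
  obtain ⟨he, hf⟩ := (mem_orthogonal_span_pair_iff hB).1 hx
  rw [map_sub, LinearMap.sub_apply, contractEnd_ι_mul_ι, he, hf, zero_smul, zero_smul, sub_zero,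
    contractEnd_ι_mul_ι_of_mem_span hB hgh (horth ▸ hx), sub_neg_eq_add, zero_add]

include hef hgh horth in
lemma sub_ι_mul_ι_eq_of_span_eq {e' f' g' h' : M} (he'f' : B e' f' = 1) (hg'h' : B g' h' = 1)
    (horth' : span R {g', h'} = B.orthogonal (span R {e', f'}))
    (hspan : span R {e', f'} = span R {e, f}) :
    ι R e' * ι R f' - ι R g' * ι R h' = ι R e * ι R f - ι R g * ι R h := by
  rw [hspan, ← horth] at horth'
  rw [ι_mul_ι_eq_of_mem_span hB hef he'f' (hspan ▸ subset_span (by simp))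
      (hspan ▸ subset_span (by simp)),
    ι_mul_ι_eq_of_mem_span hB hgh hg'h' (horth' ▸ subset_span (by simp))
      (horth' ▸ subset_span (by simp))]

end SymplecticPairs

section Rigidity

variable {K V : Type*} [Field K] [NeZero (2 : K)] [AddCommGroup V] [Module K V]

lemma eq_one_and_mem_or_eq_neg_one_and_mem {p q : Submodule K V} (hpq : IsCompl p q)
    {T : V →ₗ[K] V} (hTp : ∀ x ∈ p, T x = -x) (hTq : ∀ x ∈ q, T x = x) {c : K} {x : V}
    (hx : x ≠ 0) (hcx : c • T x = -x) : (c = 1 ∧ x ∈ p) ∨ (c = -1 ∧ x ∈ q) := by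
  obtain ⟨a, ha, b, hb, rfl⟩ := mem_sup.1 (hpq.sup_eq_top ▸ mem_top (x := x))
  rw [map_add, hTp a ha, hTq b hb] at hcx
  have hab : (1 - c) • a = -((1 + c) • b) := by
    linear_combination (norm := module) hcx
  have hpa : (1 - c) • a = 0 := disjoint_def.1 hpq.disjoint _ (smul_mem _ _ ha)
    (hab ▸ neg_mem (smul_mem _ _ hb))
  have hqb : (1 + c) • b = 0 := by rwa [hpa, eq_comm, neg_eq_zero] at hab
  rcases smul_eq_zero.1 hpa with hc | rfl
  · have hc : c = 1 := (sub_eq_zero.1 hc).symm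
    have hb0 : b = 0 := (smul_eq_zero.1 hqb).resolve_left <| by
      rw [hc, one_add_one_eq_two]; exact two_ne_zero
    exact Or.inl ⟨hc, by rwa [hb0, add_zero]⟩
  · have hb0 : b ≠ 0 := by simpa using hx
    exact Or.inr ⟨eq_neg_of_add_eq_zero_right ((smul_eq_zero.1 hqb).resolve_right hb0),
      by rwa [zero_add]⟩

lemma span_pair_le_or_le_orthogonal_of_sub_eq_smul {B : LinearMap.BilinForm K V} (hB : B.IsAlt)
    {e f g h e' f' g' h' : V} (hef : B e f = 1) (hgh : B g h = 1)
    (horth : span K {g, h} = B.orthogonal (span K {e, f})) (he'f' : B e' f' = 1)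
    (horth' : span K {g', h'} = B.orthogonal (span K {e', f'})) {c : K}
    (hc : ι K e' * ι K f' - ι K g' * ι K h' = c • (ι K e * ι K f - ι K g * ι K h)) :
    span K {e', f'} ≤ span K {e, f} ∨ span K {e', f'} ≤ B.orthogonal (span K {e, f}) := by
  have hcases : ∀ x ∈ span K {e', f'}, x ≠ 0 →
      (c = 1 ∧ x ∈ span K {e, f}) ∨ (c = -1 ∧ x ∈ B.orthogonal (span K {e, f})) := by
    intro x hx hx0
    refine eq_one_and_mem_or_eq_neg_one_and_mem (isCompl_span_pair_orthogonal hB hef)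
      (fun y hy => contractEnd_sub_apply_of_mem_span hB hef (horth ▸ subset_span (by simp))
        (horth ▸ subset_span (by simp)) hy)
      (fun y hy => contractEnd_sub_apply_of_mem_orthogonal hB hgh horth hy) hx0 ?_
    rw [← LinearMap.smul_apply, ← map_smul, ← hc]
    exact contractEnd_sub_apply_of_mem_span hB he'f' (horth' ▸ subset_span (by simp))
      (horth' ▸ subset_span (by simp)) hx
  have hne : ∀ {x y : V}, B x y = 1 → x ≠ 0 ∧ y ≠ 0 := fun hxy =>
    ⟨by rintro rfl; simp at hxy, by rintro rfl; simp at hxy⟩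
  have h1 : (1 : K) ≠ -1 := fun h => (two_ne_zero : (2 : K) ≠ 0) (by linear_combination h)
  rcases hcases e' (subset_span (by simp)) (hne he'f').1 with ⟨rfl, he'⟩ | ⟨rfl, he'⟩ <;>
    rcases hcases f' (subset_span (by simp)) (hne he'f').2 with ⟨hc1, hf'⟩ | ⟨hc1, hf'⟩
  · exact Or.inl (span_le.2 (Set.pair_subset he' hf'))
  · exact absurd hc1 h1
  · exact absurd hc1.symm h1
  · exact Or.inr (span_le.2 (Set.pair_subset he' hf'))

end Rigidity

lemma finrank_span_pair_le {K V : Type*} [Field K] [AddCommGroup V] [Module K V] (x y : V) :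
    Module.finrank K (span K {x, y}) ≤ 2 := by
  rw [← Matrix.range_cons_cons_empty x y ![]]
  exact (finrank_range_le_card _).trans (by simp)

def omega4Form : LinearMap.BilinForm ℝ (Fin 4 → ℝ) :=
  LinearMap.mk₂ ℝ omega4
    (fun _ _ _ => by simp only [omega4, Pi.add_apply]; ring)
    (fun _ _ _ => by simp only [omega4, Pi.smul_apply, smul_eq_mul]; ring)
    (fun _ _ _ => by simp only [omega4, Pi.add_apply]; ring)
    (fun _ _ _ => by simp only [omega4, Pi.smul_apply, smul_eq_mul]; ring)

lemma omega4Form_isAlt : omega4Form.IsAlt := fun x => by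
  simp only [omega4Form, LinearMap.mk₂_apply, omega4]; ring

lemma eq_orthogonal_omega4Form {H Hp : Submodule ℝ (Fin 4 → ℝ)}
    (hHp : (Hp : Set (Fin 4 → ℝ)) = {x | ∀ y ∈ H, omega4 x y = 0}) :
    Hp = omega4Form.orthogonal H :=
  SetLike.coe_injective <| hHp.trans <| Set.ext fun _ =>
    (mem_orthogonal_iff_of_isAlt omega4Form_isAlt).symm

/-- For a symplectic plane `H ⊆ ℝ⁴`, the bivector `i(H) = e ∧ f` does not
depend on the choice of basis `(e, f)` of `H` with `ω(e, f) = 1`; and for symplectic planes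
`H`, `H′`, the bivector `v(H′) = i(H′) − i(H′^⊥)` is a real scalar multiple of
`v(H) = i(H) − i(H^⊥)` iff `H′ = H` or `H′ = H^⊥`. -/
theorem stmt_14 :
    (∀ H : Submodule ℝ (Fin 4 → ℝ), IsSympPlane H →
      ∀ e f e' f' : Fin 4 → ℝ,
        Submodule.span ℝ {e, f} = H → omega4 e f = 1 →
        Submodule.span ℝ {e', f'} = H → omega4 e' f' = 1 →
        wedge e f = wedge e' f') ∧
    (∀ H H' Hp H'p : Submodule ℝ (Fin 4 → ℝ),
      IsSympPlane H → IsSympPlane H' →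
      (Hp : Set (Fin 4 → ℝ)) = {x | ∀ y ∈ H, omega4 x y = 0} →
      (H'p : Set (Fin 4 → ℝ)) = {x | ∀ y ∈ H', omega4 x y = 0} →
      ∀ e f g h e' f' g' h' : Fin 4 → ℝ,
        Submodule.span ℝ {e, f} = H → omega4 e f = 1 →
        Submodule.span ℝ {g, h} = Hp → omega4 g h = 1 →
        Submodule.span ℝ {e', f'} = H' → omega4 e' f' = 1 →
        Submodule.span ℝ {g', h'} = H'p → omega4 g' h' = 1 →
        ((∃ c : ℝ, wedge e' f' - wedge g' h' = c • (wedge e f - wedge g h)) ↔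
          (H' = H ∨ H' = Hp))) := by
  refine ⟨fun H _ e f e' f' hspan hef hspan' he'f' => ?_, ?_⟩
  · rw [← hspan'] at hspan
    exact ι_mul_ι_eq_of_mem_span omega4Form_isAlt he'f' hef (hspan ▸ subset_span (by simp))
      (hspan ▸ subset_span (by simp))
  rintro H H' Hp H'p - hH' hHp hH'p e f g h e' f' g' h' rfl hef rfl hgh rfl he'f' rfl hg'h'
  have horth := eq_orthogonal_omega4Form hHp
  have horth' := eq_orthogonal_omega4Form hH'p
  constructor
  · rintro ⟨c, hc⟩
    have hrank : ∀ x y : Fin 4 → ℝ, Module.finrank ℝ (span ℝ {x, y}) ≤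
        Module.finrank ℝ (span ℝ {e', f'}) := fun x y => hH'.1 ▸ finrank_span_pair_le x y
    rcases span_pair_le_or_le_orthogonal_of_sub_eq_smul omega4Form_isAlt hef hgh horth he'f'
      horth' hc with hle | hle
    · exact Or.inl (eq_of_le_of_finrank_le hle (hrank e f))
    · exact Or.inr (eq_of_le_of_finrank_le (horth ▸ hle) (hrank g h))
  · rintro (hspan | hspan)
    · refine ⟨1, ?_⟩
      rw [one_smul]
      exact sub_ι_mul_ι_eq_of_span_eq omega4Form_isAlt hef hgh horth he'f' hg'h' horth' hspan
    · refine ⟨-1, ?_⟩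
      rw [neg_one_smul, neg_sub]
      exact sub_ι_mul_ι_eq_of_span_eq omega4Form_isAlt hgh hef
        (span_pair_eq_orthogonal_span_pair omega4Form_isAlt hef hgh horth) he'f' hg'h' horth' hspan
end

section
/- Let P ∈ ℚ[x] be a monic polynomial of degree 2d whose roots are 2d distinct real numbers, none equal to ±1 or 0, coming in inverse pairs λ₁, λ₁⁻¹, …, λ_d, λ_d⁻¹, and assume that the Galois group of P over ℚ is the largest possible, i.e., every permutation of the set of roots commuting with the involution λ ↦ λ⁻¹ is induced by a field automorphism of the splitting field of P (so the Galois group has order 2^d·d!). Let k ≥ 1 and let Λ and Λ′ be two distinct k-element subsets of the set of roots of P such that Λ contains no inverse pair {λ, λ⁻¹}. Then the product of the elements of Λ is equal neither to the product of the elements of Λ′ nor to its negative: ∏_{λ∈Λ} λ ≠ ± ∏_{μ∈Λ′} μ. -/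
/-!
Suppose `∏ Λ = ±∏ Λ'` and pick `l ∈ Λ \ Λ'`. The transposition `l ↔ l⁻¹` of the roots commutes
with inversion, so it is induced by an automorphism of the splitting field, which preserves the
relation `(∏ Λ)² = (∏ Λ')²`. Since `l⁻¹ ∉ Λ`, the automorphism multiplies `∏ Λ` by `l⁻²`, while
it multiplies `∏ Λ'` by `1` or by `l²`. Hence `l⁸ = 1`, so `l = ±1 = l⁻¹`, and then `Λ` would
contain the inverse pair `{l, l⁻¹}`.
-/

open Finset Equiv IntermediateField

theorem Equiv.swap_inv_apply_inv {α : Type*} [InvolutiveInv α] [DecidableEq α] (a x : α) :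
    swap a a⁻¹ x⁻¹ = (swap a a⁻¹ x)⁻¹ := by
  simpa [swap_comm] using congr($(swap_apply_apply (Equiv.inv α) a a⁻¹) (Equiv.inv α x))

theorem Finset.swap_apply_mem_iff {α : Type*} [DecidableEq α] {s : Finset α} {a b : α}
    (ha : a ∈ s) (hb : b ∈ s) (x : α) : swap a b x ∈ s ↔ x ∈ s := by
  rcases eq_or_ne x a with rfl | hxa
  · simp [ha, hb]
  rcases eq_or_ne x b with rfl | hxb
  · simp [ha, hb]
  rw [swap_apply_of_ne_of_ne hxa hxb]

section SwapProd

variable {α M : Type*} [DecidableEq α] [CommMonoid M] {s : Finset α} {a b : α} (f : α → M)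

theorem Finset.prod_swap_apply_of_mem_iff (h : a ∈ s ↔ b ∈ s) :
    ∏ x ∈ s, f (swap a b x) = ∏ x ∈ s, f x := by
  by_cases ha : a ∈ s
  · refine (swap a b).prod_comp s f fun x hx => ?_
    obtain ⟨-, rfl | rfl⟩ := swap_apply_ne_self_iff.mp hx
    exacts [ha, h.mp ha]
  · refine prod_congr rfl fun x hx => congrArg f (swap_apply_of_ne_of_ne ?_ ?_)
    · rintro rfl; exact ha hx
    · rintro rfl; exact ha (h.mpr hx)

theorem Finset.prod_swap_apply_mul_of_mem_of_notMem (ha : a ∈ s) (hb : b ∉ s) :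
    (∏ x ∈ s, f (swap a b x)) * f a = (∏ x ∈ s, f x) * f b := by
  rw [← mul_prod_erase s _ ha, ← mul_prod_erase s f ha, swap_apply_left,
    prod_congr rfl fun x hx => congrArg f (swap_apply_of_ne_of_ne (ne_of_mem_erase hx)
      (ne_of_mem_of_not_mem (mem_of_mem_erase hx) hb))]
  ac_rfl

end SwapProd

namespace IntermediateField

variable {F E : Type*} [Field F] [Field E] [Algebra F E] {S : Set E}
  (φ : adjoin F S →+* adjoin F S) (τ : E → E)
  (hφ : ∀ x ∈ S, ∀ y : adjoin F S, (y : E) = x → (φ y : E) = τ x)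
include hφ

theorem exists_coe_eq_prod_and_map {T : Finset E} (hT : (T : Set E) ⊆ S) :
    ∃ p : adjoin F S, (p : E) = ∏ x ∈ T, x ∧ (φ p : E) = ∏ x ∈ T, τ x := by
  refine ⟨∏ x ∈ T.attach, ⟨x, subset_adjoin F S (hT x.2)⟩, ?_, ?_⟩
  · push_cast
    exact prod_attach T id
  · rw [map_prod]
    push_cast
    rw [← prod_attach T τ]
    exact prod_congr rfl fun x _ => hφ x (hT x.2) _ rfl

theorem prod_pow_eq_of_map {T T' : Finset E} (hT : (T : Set E) ⊆ S) (hT' : (T' : Set E) ⊆ S)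
    (n : ℕ) (h : (∏ x ∈ T, x) ^ n = (∏ x ∈ T', x) ^ n) :
    (∏ x ∈ T, τ x) ^ n = (∏ x ∈ T', τ x) ^ n := by
  obtain ⟨p, hp, hφp⟩ := exists_coe_eq_prod_and_map φ τ hφ hT
  obtain ⟨p', hp', hφp'⟩ := exists_coe_eq_prod_and_map φ τ hφ hT'
  have hpp' : p ^ n = p' ^ n := Subtype.ext (by push_cast [hp, hp']; exact h)
  rw [← hφp, ← hφp', ← SubmonoidClass.coe_pow, ← SubmonoidClass.coe_pow, ← map_pow, ← map_pow,
    hpp']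

end IntermediateField

theorem pow_eight_eq_one_of_sq_eq {K : Type*} [Field K] {l π π' ρ ρ' : K} (hπ : π ≠ 0)
    (hρ : ρ * l ^ 2 = π) (hρ' : ρ' = π' ∨ ρ' = π' * l ^ 2)
    (hsq : π ^ 2 = π' ^ 2) (hρsq : ρ ^ 2 = ρ' ^ 2) : l ^ 8 = 1 := by
  refine mul_left_cancel₀ (pow_ne_zero 2 hπ) ?_
  rcases hρ' with rfl | rfl
  · linear_combination (l ^ 4 + 1) * (l ^ 4 * (hsq - hρsq) + (ρ * l ^ 2 + π) * hρ)
  · linear_combination l ^ 8 * hsq - l ^ 4 * hρsq + (ρ * l ^ 2 + π) * hρ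

theorem stmt_15_general (k : ℕ)
    (S : Finset ℝ)
    (hinv : ∀ x ∈ S, x⁻¹ ∈ S)
    (hGal : ∀ σ : Equiv.Perm {x : ℝ // x ∈ S},
      (∀ x x' : {x : ℝ // x ∈ S}, (x' : ℝ) = (x : ℝ)⁻¹ → (σ x' : ℝ) = ((σ x : ℝ))⁻¹) →
      ∃ φ : ↥(IntermediateField.adjoin ℚ (S : Set ℝ)) ≃ₐ[ℚ]
          ↥(IntermediateField.adjoin ℚ (S : Set ℝ)),
        ∀ (x : {x : ℝ // x ∈ S}) (y : ↥(IntermediateField.adjoin ℚ (S : Set ℝ))),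
          (y : ℝ) = (x : ℝ) → (φ y : ℝ) = (σ x : ℝ))
    (Λ Λ' : Finset ℝ) (hΛS : Λ ⊆ S) (hΛ'S : Λ' ⊆ S)
    (hΛ : Λ.card = k) (hΛ' : Λ'.card = k) (hne : Λ ≠ Λ')
    (hnopair : ∀ x ∈ Λ, x⁻¹ ∉ Λ) :
    (∏ x ∈ Λ, x) ≠ (∏ x ∈ Λ', x) ∧ (∏ x ∈ Λ, x) ≠ -(∏ x ∈ Λ', x) := by
  suffices hsq : (∏ x ∈ Λ, x) ^ 2 ≠ (∏ x ∈ Λ', x) ^ 2 from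
    ⟨fun h => hsq (by rw [h]), fun h => hsq (by rw [h, neg_sq])⟩
  intro hsq
  obtain ⟨l, hlΛ, hlΛ'⟩ : ∃ l ∈ Λ, l ∉ Λ' := not_subset.mp fun hsub =>
    hne (eq_of_subset_of_card_le hsub (by rw [hΛ, hΛ']))
  have hlS := hΛS hlΛ
  obtain ⟨φ, hφ⟩ := hGal ((swap l l⁻¹).subtypePerm (swap_apply_mem_iff hlS (hinv l hlS)))
    fun x x' h => by simp [h, swap_inv_apply_inv]
  have hτsq := prod_pow_eq_of_map (φ : _ →+* _) (swap l l⁻¹) (fun x hx y hy => hφ ⟨x, hx⟩ y hy)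
    (coe_subset.2 hΛS) (coe_subset.2 hΛ'S) 2 hsq
  have hl : l ≠ 0 := fun h => hnopair l hlΛ (by simpa [h] using hlΛ)
  have hπ : ∏ x ∈ Λ, x ≠ 0 := prod_ne_zero_iff.2 fun x hx h => hnopair x hx (by simpa [h] using hx)
  have hτΛ : (∏ x ∈ Λ, swap l l⁻¹ x) * l ^ 2 = ∏ x ∈ Λ, x := by
    have := prod_swap_apply_mul_of_mem_of_notMem (fun x => x) hlΛ (hnopair l hlΛ)
    linear_combination l * this + (∏ x ∈ Λ, x) * mul_inv_cancel₀ hl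
  have hτΛ' : ∏ x ∈ Λ', swap l l⁻¹ x = ∏ x ∈ Λ', x ∨
      ∏ x ∈ Λ', swap l l⁻¹ x = (∏ x ∈ Λ', x) * l ^ 2 := by
    by_cases hl' : l⁻¹ ∈ Λ'
    · have := prod_swap_apply_mul_of_mem_of_notMem (fun x => x) hl' hlΛ'
      rw [swap_comm] at this
      exact Or.inr (by linear_combination l * this - (∏ x ∈ Λ', swap l l⁻¹ x) * mul_inv_cancel₀ hl)
    · exact Or.inl (prod_swap_apply_of_mem_iff (fun x => x) (iff_of_false hlΛ' hl'))
  obtain rfl | ⟨rfl, -⟩ := (pow_eq_one_iff_of_ne_zero (by norm_num)).1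
    (pow_eight_eq_one_of_sq_eq hπ hτΛ hτΛ' hsq hτsq)
  all_goals exact hnopair _ hlΛ (by simpa)

/-- Let `P ∈ ℚ[x]` be monic of degree `2d` with `2d` distinct real roots,
none equal to `0`, `±1`, coming in inverse pairs, and with the largest possible Galois group
(every permutation of the roots commuting with inversion is induced by an automorphism of the
splitting field). If `Λ ≠ Λ′` are `k`-element subsets of the roots and `Λ` contains no inverse
pair, then `∏ Λ ≠ ± ∏ Λ′`. -/
theorem stmt_15 (d k : ℕ) (hk : 1 ≤ k)
    (P : Polynomial ℚ) (hmonic : P.Monic) (hdeg : P.natDegree = 2 * d)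
    (S : Finset ℝ) (hcard : S.card = 2 * d)
    (hroots : ∀ x : ℝ, x ∈ S ↔ Polynomial.aeval x P = 0)
    (h0 : ∀ x ∈ S, x ≠ 0) (h1 : ∀ x ∈ S, x ≠ 1 ∧ x ≠ -1)
    (hinv : ∀ x ∈ S, x⁻¹ ∈ S)
    (hGal : ∀ σ : Equiv.Perm {x : ℝ // x ∈ S},
      (∀ x x' : {x : ℝ // x ∈ S}, (x' : ℝ) = (x : ℝ)⁻¹ → (σ x' : ℝ) = ((σ x : ℝ))⁻¹) →
      ∃ φ : ↥(IntermediateField.adjoin ℚ (S : Set ℝ)) ≃ₐ[ℚ]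
          ↥(IntermediateField.adjoin ℚ (S : Set ℝ)),
        ∀ (x : {x : ℝ // x ∈ S}) (y : ↥(IntermediateField.adjoin ℚ (S : Set ℝ))),
          (y : ℝ) = (x : ℝ) → (φ y : ℝ) = (σ x : ℝ))
    (Λ Λ' : Finset ℝ) (hΛS : Λ ⊆ S) (hΛ'S : Λ' ⊆ S)
    (hΛ : Λ.card = k) (hΛ' : Λ'.card = k) (hne : Λ ≠ Λ')
    (hnopair : ∀ x ∈ Λ, x⁻¹ ∉ Λ) :
    (∏ x ∈ Λ, x) ≠ (∏ x ∈ Λ', x) ∧ (∏ x ∈ Λ, x) ≠ -(∏ x ∈ Λ', x) :=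
  stmt_15_general k S hinv hGal Λ Λ' hΛS hΛ'S hΛ hΛ' hne hnopair
end
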